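/- arXiv:1207.2142 — 8 statements merged into one kernel-verified Lean document; each statement's English description precedes it below -/
import Mathlib

section
/- For every nontrivial graph G of order n, 2 ≤ β(G) + β(Ḡ) ≤ 2n − 1, where Ḡ denotes the complement of G. -/
open SimpleGraph

/-- `S` is a locating set of `G`: every vertex outside `S` is at finite distance from
some vertex of `S`, and any two distinct vertices have distinct vectors of distances
to `S`. -/
def IsLocatingSet {V : Type*} (G : SimpleGraph V) (S : Set V) : Prop :=
  (∀ v ∉ S, ∃ x ∈ S, G.edist v x ≠ ⊤) ∧
  ∀ u v : V, u ≠ v → ∃ x ∈ S, G.edist u x ≠ G.edist v x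

/-- The location number (metric dimension) `β(G)`: the minimum cardinality of a
locating set of `G`. -/
noncomputable def locNum {V : Type*} [Fintype V] (G : SimpleGraph V) : ℕ :=
  sInf {k | ∃ S : Set V, IsLocatingSet G S ∧ S.ncard = k}

lemma isLocating_univ {V : Type*} (G : SimpleGraph V) :
    IsLocatingSet G Set.univ := by
  constructor
  · intro v hv; simp at hv
  · intro u v huv
    refine ⟨u, Set.mem_univ _, ?_⟩
    rw [SimpleGraph.edist_self]
    intro h
    exact huv ((edist_eq_zero_iff.mp h.symm).symm)

lemma isLocating_remove {V : Type*} (G : SimpleGraph V) {v w : V} (h : G.Adj v w) :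
    IsLocatingSet G (Set.univ \ {v}) := by
  constructor
  · intro u hu
    simp only [Set.mem_diff, Set.mem_univ, true_and, Set.mem_singleton_iff, not_not] at hu
    subst hu
    exact ⟨w, by simp [h.ne'], (edist_ne_top_iff_reachable.mpr h.reachable)⟩
  · intro a b hab
    by_cases ha : a = v
    · refine ⟨b, by simp [Ne.symm (ha ▸ hab)], ?_⟩
      rw [SimpleGraph.edist_self]
      intro hh
      exact hab (edist_eq_zero_iff.mp hh)
    · refine ⟨a, by simp [ha], ?_⟩
      rw [SimpleGraph.edist_self]
      intro hh
      exact hab ((edist_eq_zero_iff.mp hh.symm).symm)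

lemma locNum_le_card {V : Type*} [Fintype V] (G : SimpleGraph V) :
    locNum G ≤ Fintype.card V :=
  Nat.sInf_le ⟨Set.univ, isLocating_univ G, (Set.ncard_univ V).trans Nat.card_eq_fintype_card⟩

lemma one_le_locNum {V : Type*} [Fintype V] (G : SimpleGraph V)
    (hn : 2 ≤ Fintype.card V) : 1 ≤ locNum G := by
  rw [Nat.one_le_iff_ne_zero]
  intro h0
  have hne : {k | ∃ S : Set V, IsLocatingSet G S ∧ S.ncard = k}.Nonempty :=
    ⟨_, Set.univ, isLocating_univ G, rfl⟩
  have := Nat.sInf_mem hne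
  rw [show sInf {k | ∃ S : Set V, IsLocatingSet G S ∧ S.ncard = k} = locNum G from rfl, h0] at this
  obtain ⟨S, hS, hcard⟩ := this
  have hSfin : S.Finite := Set.toFinite S
  have hSempty : S = ∅ := (Set.ncard_eq_zero hSfin).mp hcard
  obtain ⟨a, b, hab⟩ := Fintype.exists_pair_of_one_lt_card (α := V) (by omega)
  obtain ⟨x, hx, -⟩ := hS.2 a b hab
  rw [hSempty] at hx
  exact hx

lemma locNum_le_pred {V : Type*} [Fintype V] (G : SimpleGraph V) {v w : V}
    (h : G.Adj v w) : locNum G ≤ Fintype.card V - 1 := by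
  apply Nat.sInf_le
  refine ⟨Set.univ \ {v}, isLocating_remove G h, ?_⟩
  rw [Set.ncard_diff_singleton_of_mem (Set.mem_univ v), Set.ncard_univ, Nat.card_eq_fintype_card]

/-- Nordhaus-Gaddum bounds for the location number: for every nontrivial graph `G`
of order `n`, `2 ≤ β(G) + β(Ḡ) ≤ 2n - 1`. -/
theorem locNum_nordhaus_gaddum {V : Type*} [Fintype V] (G : SimpleGraph V)
    (hn : 2 ≤ Fintype.card V) :
    2 ≤ locNum G + locNum Gᶜ ∧ locNum G + locNum Gᶜ ≤ 2 * Fintype.card V - 1 := by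
  have h1 := one_le_locNum G hn
  have h2 := one_le_locNum Gᶜ hn
  have h3 := locNum_le_card G
  have h4 := locNum_le_card Gᶜ
  refine ⟨by omega, ?_⟩
  by_cases hE : ∃ v w, G.Adj v w
  · obtain ⟨v, w, hvw⟩ := hE
    have := locNum_le_pred G hvw
    omega
  · push_neg at hE
    obtain ⟨a, b, hab⟩ := Fintype.exists_pair_of_one_lt_card (α := V) (by omega)
    have hadj : Gᶜ.Adj a b := ⟨hab, hE a b⟩
    have := locNum_le_pred Gᶜ hadj
    omega
end

section
/- Every doubly-connected graph G of order n ≥ 6 such that both G and its complement Ḡ have diameter 2 contains a locating set of cardinality n − 4. -/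
/-!
Call a pair `u, v` shattered if each of the four adjacency patterns towards `(u, v)` is realised
by some vertex `p, q, r, s` outside the pair. Then `V \ {p, q, r, s}` is locating: it contains `u`
and `v`, which tell `p, q, r, s` apart by distance `1` versus distance `≠ 1`, and every other
vertex is the only one at distance `0` from itself.

A shattered pair exists once `G` and `Ḡ` have diameter at most `2` and `n ≥ 6`. Take `u` of
minimum degree, a neighbour `c` of `u` and a common non-neighbour `z` of `u` and `c`. As
`deg z ≥ deg u` and `c ∈ N(u) \ N(z)`, the non-adjacent pair `u, z` has private neighbours on both
sides, and a common neighbour. If some vertex misses both, the pair is shattered; otherwise a case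
analysis on common neighbours in `G` and in `Ḡ`, using a sixth vertex, produces another shattered
pair. The five-cycle shows that `n ≥ 6` cannot be dropped.
-/

open SimpleGraph

namespace SimpleGraph

variable {V : Type*} {G : SimpleGraph V} {u v : V}

lemma exists_adj_adj_of_ediam_le_two (hd : G.ediam ≤ 2) (hne : u ≠ v) (hna : ¬G.Adj u v) :
    ∃ w, G.Adj u w ∧ G.Adj v w := by
  have hle : G.edist u v ≤ 2 := G.edist_le_ediam.trans hd
  obtain ⟨w, hw⟩ := Set.nonempty_iff_ne_empty.2 fun h =>
    hle.not_gt (two_lt_edist_iff.2 ⟨hne, hna, h⟩)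
  exact ⟨w, (G.mem_commonNeighbors).1 hw⟩

lemma exists_not_adj_not_adj_of_compl_ediam_le_two (hdc : Gᶜ.ediam ≤ 2) (h : G.Adj u v) :
    ∃ w, w ≠ u ∧ w ≠ v ∧ ¬G.Adj u w ∧ ¬G.Adj v w := by
  obtain ⟨w, hu, hv⟩ :=
    exists_adj_adj_of_ediam_le_two hdc h.ne fun h' => ((compl_adj G u v).1 h').2 h
  rw [compl_adj] at hu hv
  exact ⟨w, hu.1.symm, hv.1.symm, hu.2, hv.2⟩

def IsShatteredPair (G : SimpleGraph V) (u v : V) : Prop :=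
  ∀ b₁ b₂ : Bool, ∃ x, x ≠ u ∧ x ≠ v ∧ (G.Adj u x ↔ b₁) ∧ (G.Adj v x ↔ b₂)

lemma isShatteredPair_of_not_adj (hd : G.ediam ≤ 2) (huv : u ≠ v) (hna : ¬G.Adj u v)
    {a b s : V} (hua : G.Adj u a) (hva : ¬G.Adj v a) (hub : ¬G.Adj u b) (hvb : G.Adj v b)
    (hsu : s ≠ u) (hsv : s ≠ v) (hus : ¬G.Adj u s) (hvs : ¬G.Adj v s) :
    G.IsShatteredPair u v := by
  obtain ⟨c, huc, hvc⟩ := exists_adj_adj_of_ediam_le_two hd huv hna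
  rintro (_ | _) (_ | _)
  · exact ⟨s, hsu, hsv, by simpa using hus, by simpa using hvs⟩
  · exact ⟨b, fun h => hna (h ▸ hvb).symm, hvb.ne', by simpa using hub, by simpa using hvb⟩
  · exact ⟨a, hua.ne', fun h => hna (h ▸ hua), by simpa using hua, by simpa using hva⟩
  · exact ⟨c, huc.ne', hvc.ne', by simpa using huc, by simpa using hvc⟩

lemma isShatteredPair_of_adj (hdc : Gᶜ.ediam ≤ 2) (huv : G.Adj u v)
    {p a b : V} (hup : G.Adj u p) (hvp : G.Adj v p) (hav : a ≠ v) (hua : G.Adj u a)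
    (hva : ¬G.Adj v a) (hbu : b ≠ u) (hub : ¬G.Adj u b) (hvb : G.Adj v b) :
    G.IsShatteredPair u v := by
  obtain ⟨s, hsu, hsv, hus, hvs⟩ := exists_not_adj_not_adj_of_compl_ediam_le_two hdc huv
  rintro (_ | _) (_ | _)
  · exact ⟨s, hsu, hsv, by simpa using hus, by simpa using hvs⟩
  · exact ⟨b, hbu, hvb.ne', by simpa using hub, by simpa using hvb⟩
  · exact ⟨a, hua.ne', hav, by simpa using hua, by simpa using hva⟩
  · exact ⟨p, hup.ne', hvp.ne', by simpa using hup, by simpa using hvp⟩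

lemma isLocatingSet_of_adj_separates (hG : G.Connected) {S : Set V} (hS : S.Nonempty)
    (hsep : ∀ x ∉ S, ∀ y ∉ S, x ≠ y → ∃ w ∈ S, ¬(G.Adj w x ↔ G.Adj w y)) :
    IsLocatingSet G S := by
  obtain ⟨w, hw⟩ := hS
  refine ⟨fun x _ => ⟨w, hw, edist_ne_top_iff_reachable.2 (hG.preconnected x w)⟩,
    fun x y hxy => ?_⟩
  by_cases hx : x ∈ S
  · refine ⟨x, hx, ?_⟩
    rw [edist_self, ne_comm, ne_eq, edist_eq_zero_iff]
    exact hxy.symm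
  by_cases hy : y ∈ S
  · refine ⟨y, hy, ?_⟩
    rw [edist_self, ne_eq, edist_eq_zero_iff]
    exact hxy
  obtain ⟨w, hw, hxy⟩ := hsep x hx y hy hxy
  refine ⟨w, hw, fun h => hxy ?_⟩
  rw [G.adj_comm w x, G.adj_comm w y, ← edist_eq_one_iff_adj, ← edist_eq_one_iff_adj, h]

lemma IsShatteredPair.exists_isLocatingSet [Fintype V] (hG : G.Connected)
    (h : G.IsShatteredPair u v) :
    ∃ S : Set V, IsLocatingSet G S ∧ S.ncard = Fintype.card V - 4 := by
  choose f hfu hfv hf₁ hf₂ using h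
  have hf : Function.Injective fun b : Bool × Bool => f b.1 b.2 := by
    rintro ⟨b₁, b₂⟩ ⟨c₁, c₂⟩ (h : f b₁ b₂ = f c₁ c₂)
    have h₁ := hf₁ b₁ b₂
    have h₂ := hf₂ b₁ b₂
    rw [h, hf₁, Bool.coe_iff_coe] at h₁
    rw [h, hf₂, Bool.coe_iff_coe] at h₂
    rw [h₁, h₂]
  set T := Set.range fun b : Bool × Bool => f b.1 b.2
  refine ⟨Tᶜ, isLocatingSet_of_adj_separates hG ⟨u, ?_⟩ ?_, ?_⟩
  · rintro ⟨b, hb⟩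
    exact hfu _ _ hb
  · simp only [Set.notMem_compl_iff]
    rintro _ ⟨⟨b₁, b₂⟩, rfl⟩ _ ⟨⟨c₁, c₂⟩, rfl⟩ hne
    by_cases h₁ : b₁ = c₁
    · refine ⟨v, fun ⟨b, hb⟩ => hfv _ _ hb, ?_⟩
      have h₂ : b₂ ≠ c₂ := by rintro rfl; exact hne (by rw [h₁])
      simpa [hf₂] using h₂
    · refine ⟨u, fun ⟨b, hb⟩ => hfu _ _ hb, ?_⟩
      simpa [hf₁] using h₁
  · rw [Set.ncard_compl, Set.ncard_range_of_injective hf, Nat.card_eq_fintype_card,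
    Nat.card_eq_fintype_card]
    rfl

lemma exists_not_adj_with_private_neighbors [Fintype V] [Nontrivial V] (hd : G.ediam ≤ 2)
    (hdc : Gᶜ.ediam ≤ 2) :
    ∃ u v, u ≠ v ∧ ¬G.Adj u v ∧ (∃ a, G.Adj u a ∧ ¬G.Adj v a) ∧
      ∃ b, G.Adj v b ∧ ¬G.Adj u b := by
  classical
  obtain ⟨u, hu⟩ := G.exists_minimal_degree_vertex
  obtain ⟨c, huc⟩ : ∃ c, G.Adj u c := by
    obtain ⟨x, hx⟩ := exists_ne u
    by_cases hux : G.Adj u x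
    · exact ⟨x, hux⟩
    · obtain ⟨c, huc, -⟩ := exists_adj_adj_of_ediam_le_two hd hx.symm hux
      exact ⟨c, huc⟩
  obtain ⟨z, hzu, -, huz, hcz⟩ := exists_not_adj_not_adj_of_compl_ediam_le_two hdc huc
  refine ⟨u, z, hzu.symm, huz, ⟨c, huc, fun h => hcz h.symm⟩, ?_⟩
  by_contra! hsub
  have hssub : G.neighborFinset z ⊂ G.neighborFinset u :=
    Finset.ssubset_iff_subset_ne.2 ⟨fun b hb => by simpa using hsub b (by simpa using hb),
      fun h => hcz ((G.mem_neighborFinset z c).1 (h ▸ (G.mem_neighborFinset u c).2 huc)).symm⟩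
  have := Finset.card_lt_card hssub
  rw [card_neighborFinset_eq_degree, card_neighborFinset_eq_degree] at this
  have := G.minDegree_le_degree z
  omega

lemma exists_isShatteredPair_of_dominating [Fintype V] (hd : G.ediam ≤ 2) (hdc : Gᶜ.ediam ≤ 2)
    (hn : 6 ≤ Fintype.card V) (huv : u ≠ v) (hnuv : ¬G.Adj u v)
    (hdom : ∀ x, x ≠ u → x ≠ v → ¬G.Adj u x → G.Adj v x) : ∃ x y, G.IsShatteredPair x y := by
  obtain ⟨c, huc, hvc⟩ := exists_adj_adj_of_ediam_le_two hd huv hnuv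
  obtain ⟨a, hav, hac, hva, hca⟩ := exists_not_adj_not_adj_of_compl_ediam_le_two hdc hvc
  obtain ⟨b, hbu, hbc, hub, hcb⟩ := exists_not_adj_not_adj_of_compl_ediam_le_two hdc huc
  have hua : G.Adj u a := by
    by_contra h
    exact hva (hdom a (by rintro rfl; exact hca huc.symm) hav h)
  have hvb : G.Adj v b := hdom b hbu (by rintro rfl; exact hcb hvc.symm) hub
  by_cases hab : G.Adj a b
  swap
  · refine ⟨a, b, isShatteredPair_of_not_adj (a := u) (b := v) (s := c) hd
      ?_ hab ?_ ?_ ?_ ?_ ?_ ?_ ?_ ?_⟩ <;> grind [adj_comm]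
  by_cases hy : ∃ y, G.Adj a y ∧ G.Adj b y
  · obtain ⟨y, hay, hby⟩ := hy
    refine ⟨a, b, isShatteredPair_of_adj (p := y) (a := u) (b := v) hdc hab
      hay hby ?_ ?_ ?_ ?_ ?_ ?_⟩ <;> grind [adj_comm]
  push Not at hy
  classical
  obtain ⟨y, -, hy'⟩ := Finset.exists_mem_notMem_of_card_lt_card
    (s := [u, v, a, b, c].toFinset) (t := Finset.univ)
    ((List.toFinset_card_le _).trans_lt (by simp; omega))
  simp only [List.mem_toFinset, List.mem_cons, List.not_mem_nil, not_or] at hy'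
  obtain ⟨hyu, hyv, hya, hyb, hyc, -⟩ := hy'
  by_cases hcy : G.Adj c y
  · by_cases huy : G.Adj u y
    · refine ⟨u, c, isShatteredPair_of_adj (p := y) (a := a) (b := v) hdc huc
        huy hcy ?_ ?_ ?_ ?_ ?_ ?_⟩ <;> grind [adj_comm]
    · refine ⟨v, c, isShatteredPair_of_adj (p := y) (a := b) (b := u) hdc hvc
        (hdom y hyu hyv huy) hcy ?_ ?_ ?_ ?_ ?_ ?_⟩ <;> grind [adj_comm]
  · by_cases hay : G.Adj a y
    · refine ⟨b, c, isShatteredPair_of_not_adj (a := a) (b := u) (s := y) hd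
        ?_ ?_ ?_ ?_ ?_ ?_ ?_ ?_ ?_ ?_⟩ <;> grind [adj_comm]
    · refine ⟨a, c, isShatteredPair_of_not_adj (a := b) (b := v) (s := y) hd
        ?_ ?_ ?_ ?_ ?_ ?_ ?_ ?_ ?_ ?_⟩ <;> grind [adj_comm]

theorem exists_isShatteredPair [Fintype V] (hd : G.ediam ≤ 2) (hdc : Gᶜ.ediam ≤ 2)
    (hn : 6 ≤ Fintype.card V) : ∃ u v, G.IsShatteredPair u v := by
  have : Nontrivial V := Fintype.one_lt_card_iff_nontrivial.1 (by omega)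
  obtain ⟨u, v, huv, hnuv, ⟨a, hua, hva⟩, ⟨b, hvb, hub⟩⟩ :=
    exists_not_adj_with_private_neighbors hd hdc
  by_cases hdom : ∃ s, s ≠ u ∧ s ≠ v ∧ ¬G.Adj u s ∧ ¬G.Adj v s
  · obtain ⟨s, hsu, hsv, hus, hvs⟩ := hdom
    exact ⟨u, v, isShatteredPair_of_not_adj hd huv hnuv hua hva hub hvb hsu hsv hus hvs⟩
  push Not at hdom
  exact exists_isShatteredPair_of_dominating hd hdc hn huv hnuv hdom

end SimpleGraph

theorem exists_locating_set_card_sub_four_general {V : Type*} [Fintype V] (G : SimpleGraph V)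
    (hn : 6 ≤ Fintype.card V) (hG : G.Connected)
    (hd : G.ediam = 2) (hdc : Gᶜ.ediam = 2) :
    ∃ S : Set V, IsLocatingSet G S ∧ S.ncard = Fintype.card V - 4 := by
  obtain ⟨u, v, h⟩ := exists_isShatteredPair hd.le hdc.le hn
  exact h.exists_isLocatingSet hG

/-- Every doubly-connected graph of order `n ≥ 6` such that both `G` and `Ḡ` have
diameter `2` contains a locating set of cardinality `n - 4`. -/
theorem exists_locating_set_card_sub_four {V : Type*} [Fintype V] (G : SimpleGraph V)
    (hn : 6 ≤ Fintype.card V) (hG : G.Connected) (hGc : Gᶜ.Connected)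
    (hd : G.ediam = 2) (hdc : Gᶜ.ediam = 2) :
    ∃ S : Set V, IsLocatingSet G S ∧ S.ncard = Fintype.card V - 4 :=
  exists_locating_set_card_sub_four_general G hn hG hd hdc
end

section
/- For every nontrivial graph G of order n, 3 ≤ η(G) + η(Ḡ) ≤ 2n − 1. -/
open SimpleGraph

/-- `D` is a dominating set of `G`. -/
def IsDominatingSet {V : Type*} (G : SimpleGraph V) (D : Set V) : Prop :=
  ∀ v ∉ D, ∃ u ∈ D, G.Adj v u

/-- The metric-location-domination number `η(G)`: the minimum cardinality of a set
that is both dominating and locating. -/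
noncomputable def mldNum {V : Type*} [Fintype V] (G : SimpleGraph V) : ℕ :=
  sInf {k | ∃ D : Set V, IsDominatingSet G D ∧ IsLocatingSet G D ∧ D.ncard = k}

lemma univ_mem_mld {V : Type*} [Fintype V] (G : SimpleGraph V) :
    Fintype.card V ∈ {k | ∃ D : Set V, IsDominatingSet G D ∧ IsLocatingSet G D ∧ D.ncard = k} := by
  refine ⟨Set.univ, fun v hv => absurd (Set.mem_univ v) hv,
    ⟨fun v hv => absurd (Set.mem_univ v) hv, fun u v huv => ⟨u, Set.mem_univ u, ?_⟩⟩,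
    by simp [Set.ncard_univ]⟩
  rw [edist_self]
  exact fun h => huv ((edist_eq_zero_iff.mp h.symm).symm)

lemma mldNum_le_card {V : Type*} [Fintype V] (G : SimpleGraph V) :
    mldNum G ≤ Fintype.card V := Nat.sInf_le (univ_mem_mld G)

lemma one_le_mldNum {V : Type*} [Fintype V] (G : SimpleGraph V)
    (hn : 2 ≤ Fintype.card V) : 1 ≤ mldNum G := by
  rw [Nat.one_le_iff_ne_zero]
  intro h0
  have h := Nat.sInf_eq_zero.mp h0
  rcases h with h | h
  · obtain ⟨D, _, hL, hc⟩ := h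
    have hD : D = ∅ := Set.ncard_eq_zero (Set.toFinite D) |>.mp hc
    obtain ⟨u, v, huv⟩ := Fintype.exists_pair_of_one_lt_card (α := V) (by omega)
    obtain ⟨x, hx, _⟩ := hL.2 u v huv
    simp [hD] at hx
  · exact absurd (univ_mem_mld G) (by simp [h])

lemma mldNum_le_pred {V : Type*} [Fintype V] (G : SimpleGraph V)
    {u v : V} (h : G.Adj u v) : mldNum G ≤ Fintype.card V - 1 := by
  apply Nat.sInf_le
  refine ⟨{v}ᶜ, ?_, ⟨?_, ?_⟩, ?_⟩
  · intro w hw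
    simp only [Set.mem_compl_iff, Set.mem_singleton_iff, not_not] at hw
    subst hw
    exact ⟨u, by simp [h.ne], h.symm⟩
  · intro w hw
    simp only [Set.mem_compl_iff, Set.mem_singleton_iff, not_not] at hw
    subst hw
    exact ⟨u, by simp [h.ne], edist_ne_top_iff_reachable.mpr h.symm.reachable⟩
  · intro a b hab
    by_cases ha : a = v
    · refine ⟨b, Set.mem_compl_singleton_iff.mpr fun hb => hab (ha.trans hb.symm), ?_⟩
      rw [SimpleGraph.edist_self]
      exact fun hh => hab (edist_eq_zero_iff.mp hh)
    · refine ⟨a, by simp [ha], ?_⟩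
      rw [SimpleGraph.edist_self]
      exact fun hh => hab ((edist_eq_zero_iff.mp hh.symm).symm)
  · have h1 := Set.ncard_add_ncard_compl ({v} : Set V)
    have h2 : ({v} : Set V).ncard = 1 := Set.ncard_singleton v
    have h3 : Nat.card V = Fintype.card V := Nat.card_eq_fintype_card
    omega

lemma adj_all_of_mldNum_eq_one {V : Type*} [Fintype V] (G : SimpleGraph V)
    (h : mldNum G = 1) : ∃ x : V, ∀ w : V, w ≠ x → G.Adj w x := by
  have hne : {k | ∃ D : Set V, IsDominatingSet G D ∧ IsLocatingSet G D ∧ D.ncard = k}.Nonempty :=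
    ⟨_, univ_mem_mld G⟩
  have hmem := Nat.sInf_mem hne
  rw [show sInf _ = mldNum G from rfl, h] at hmem
  obtain ⟨D, hDom, _, hc⟩ := hmem
  obtain ⟨x, hx⟩ := Set.ncard_eq_one.mp hc
  refine ⟨x, fun w hw => ?_⟩
  obtain ⟨y, hy, hadj⟩ := hDom w (by simp [hx, hw])
  rw [hx, Set.mem_singleton_iff] at hy
  exact hy ▸ hadj

/-- Nordhaus-Gaddum bounds for the metric-location-domination number: for every
nontrivial graph `G` of order `n`, `3 ≤ η(G) + η(Ḡ) ≤ 2n - 1`. -/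
theorem mldNum_nordhaus_gaddum {V : Type*} [Fintype V] (G : SimpleGraph V)
    (hn : 2 ≤ Fintype.card V) :
    3 ≤ mldNum G + mldNum Gᶜ ∧ mldNum G + mldNum Gᶜ ≤ 2 * Fintype.card V - 1 := by
  constructor
  · have h1 := one_le_mldNum G hn
    have h2 := one_le_mldNum Gᶜ hn
    by_contra hlt
    push_neg at hlt
    have hG : mldNum G = 1 := by omega
    have hGc : mldNum Gᶜ = 1 := by omega
    obtain ⟨x, hx⟩ := adj_all_of_mldNum_eq_one G hG
    obtain ⟨y, hy⟩ := adj_all_of_mldNum_eq_one Gᶜ hGc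
    by_cases hxy : x = y
    · subst hxy
      obtain ⟨u, v, huv⟩ := Fintype.exists_pair_of_one_lt_card (α := V) (by omega)
      rcases eq_or_ne u x with rfl | hu
      · exact (hy v (Ne.symm huv)).2 (hx v (Ne.symm huv))
      · exact (hy u hu).2 (hx u hu)
    · exact (hy x hxy).2 (hx y (Ne.symm hxy)).symm
  · obtain ⟨u, v, huv⟩ := Fintype.exists_pair_of_one_lt_card (α := V) (by omega)
    by_cases hadj : G.Adj u v
    · have := mldNum_le_pred G hadj
      have := mldNum_le_card Gᶜ
      omega
    · have hc : Gᶜ.Adj u v := ⟨huv, hadj⟩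
      have := mldNum_le_pred Gᶜ hc
      have := mldNum_le_card G
      omega
end

section
/- For a nontrivial graph G of order n, η(G) + η(Ḡ) = 3 if and only if G is isomorphic to the complete graph K_2 or to its complement, the edgeless graph on 2 vertices. -/
open SimpleGraph

lemma mld_set_nonempty {V : Type*} [Fintype V] (G : SimpleGraph V) :
    {k | ∃ D : Set V, IsDominatingSet G D ∧ IsLocatingSet G D ∧ D.ncard = k}.Nonempty := by
  refine ⟨(Set.univ : Set V).ncard, Set.univ, ?_, ⟨?_, ?_⟩, rfl⟩
  · intro v hv; exact absurd (Set.mem_univ v) hv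
  · intro v hv; exact absurd (Set.mem_univ v) hv
  · intro u v huv
    refine ⟨u, Set.mem_univ u, ?_⟩
    rw [SimpleGraph.edist_self]
    exact fun h => huv (SimpleGraph.edist_eq_zero_iff.mp h.symm).symm

lemma mld_ne_zero {V : Type*} [Fintype V] (G : SimpleGraph V)
    (hn : 2 ≤ Fintype.card V) : mldNum G ≠ 0 := by
  intro h0
  have hmem := Nat.sInf_mem (mld_set_nonempty G)
  rw [show sInf {k | ∃ D : Set V, IsDominatingSet G D ∧ IsLocatingSet G D ∧ D.ncard = k}
      = mldNum G from rfl, h0] at hmem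
  obtain ⟨D, _, hloc, hcard⟩ := hmem
  have hDfin : D.Finite := Set.toFinite D
  rw [Set.ncard_eq_zero hDfin] at hcard
  obtain ⟨u, v, huv⟩ := Fintype.exists_pair_of_one_lt_card (α := V) (by omega)
  obtain ⟨x, hx, -⟩ := hloc.2 u v huv
  rw [hcard] at hx
  exact hx

lemma card_le_two_of_mld_eq_one {V : Type*} [Fintype V] (G : SimpleGraph V)
    (h : mldNum G = 1) : Fintype.card V ≤ 2 := by
  have hmem := Nat.sInf_mem (mld_set_nonempty G)
  rw [show sInf {k | ∃ D : Set V, IsDominatingSet G D ∧ IsLocatingSet G D ∧ D.ncard = k}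
      = mldNum G from rfl, h] at hmem
  obtain ⟨D, hdom, hloc, hcard⟩ := hmem
  rw [Set.ncard_eq_one] at hcard
  obtain ⟨x, rfl⟩ := hcard
  classical
  have key : ∀ u v : V, u ≠ x → v ≠ x → u = v := by
    intro u v hu hv
    by_contra huv
    obtain ⟨y, hy, hne⟩ := hloc.2 u v huv
    rw [Set.mem_singleton_iff] at hy; rw [hy] at hne
    obtain ⟨zu, hzu, hadju⟩ := hdom u (by simpa using hu)
    obtain ⟨zv, hzv, hadjv⟩ := hdom v (by simpa using hv)
    rw [Set.mem_singleton_iff] at hzu hzv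
    rw [hzu] at hadju; rw [hzv] at hadjv
    have h1 : G.edist u x = 1 := SimpleGraph.edist_eq_one_iff_adj.mpr hadju
    have h2 : G.edist v x = 1 := SimpleGraph.edist_eq_one_iff_adj.mpr hadjv
    rw [h1, h2] at hne
    exact hne rfl
  have : Function.Injective (fun v : V => decide (v = x)) := by
    intro u v huv
    simp only [decide_eq_decide] at huv
    by_cases hu : u = x
    · subst hu; exact (huv.mp rfl).symm
    · exact key u v hu (fun h => hu (huv.mpr h))
  calc Fintype.card V ≤ Fintype.card Bool := Fintype.card_le_of_injective _ this
    _ = 2 := by simp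

lemma mld_eq_one_of_adj {V : Type*} [Fintype V] (G : SimpleGraph V)
    (a b : V) (hab : a ≠ b) (hall : ∀ v : V, v = a ∨ v = b) (hadj : G.Adj a b) :
    mldNum G = 1 := by
  classical
  have hn : 2 ≤ Fintype.card V := Fintype.one_lt_card_iff_nontrivial.mpr ⟨a, b, hab⟩
  have hmem : (1 : ℕ) ∈ {k | ∃ D : Set V, IsDominatingSet G D ∧ IsLocatingSet G D ∧ D.ncard = k} := by
    refine ⟨{a}, ?_, ⟨?_, ?_⟩, by simp⟩
    · intro v hv
      rcases hall v with rfl | rfl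
      · exact absurd rfl hv
      · exact ⟨a, rfl, hadj.symm⟩
    · intro v hv
      rcases hall v with rfl | rfl
      · exact absurd rfl hv
      · exact ⟨a, rfl, SimpleGraph.edist_ne_top_iff_reachable.mpr hadj.symm.reachable⟩
    · intro u v huv
      refine ⟨a, rfl, ?_⟩
      rcases hall u with rfl | rfl <;> rcases hall v with rfl | rfl
      · exact absurd rfl huv
      · rw [SimpleGraph.edist_self, SimpleGraph.edist_eq_one_iff_adj.mpr hadj.symm]; decide
      · rw [SimpleGraph.edist_self, SimpleGraph.edist_eq_one_iff_adj.mpr hadj.symm]; decide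
      · exact absurd rfl huv
  have hle : mldNum G ≤ 1 := Nat.sInf_le hmem
  have hne := mld_ne_zero G hn
  omega

lemma mld_eq_two_of_not_adj {V : Type*} [Fintype V] (G : SimpleGraph V)
    (a b : V) (hab : a ≠ b) (hall : ∀ v : V, v = a ∨ v = b)
    (hcard : Fintype.card V = 2) (hnadj : ¬ G.Adj a b) :
    mldNum G = 2 := by
  classical
  have hmem2 : (2 : ℕ) ∈ {k | ∃ D : Set V, IsDominatingSet G D ∧ IsLocatingSet G D ∧ D.ncard = k} := by
    obtain ⟨k, D, hdom, hloc, hk⟩ := mld_set_nonempty G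
    refine ⟨Set.univ, ?_, ⟨?_, ?_⟩, by rw [Set.ncard_univ, Nat.card_eq_fintype_card, hcard]⟩
    · intro v hv; exact absurd (Set.mem_univ v) hv
    · intro v hv; exact absurd (Set.mem_univ v) hv
    · intro u v huv
      refine ⟨u, Set.mem_univ u, ?_⟩
      rw [SimpleGraph.edist_self]
      exact fun h => huv (SimpleGraph.edist_eq_zero_iff.mp h.symm).symm
  have hle : mldNum G ≤ 2 := Nat.sInf_le hmem2
  have hne0 := mld_ne_zero G (by omega)
  have hne1 : mldNum G ≠ 1 := by
    intro h1
    have hmem := Nat.sInf_mem (mld_set_nonempty G)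
    rw [show sInf {k | ∃ D : Set V, IsDominatingSet G D ∧ IsLocatingSet G D ∧ D.ncard = k}
        = mldNum G from rfl, h1] at hmem
    obtain ⟨D, hdom, hloc, hDc⟩ := hmem
    rw [Set.ncard_eq_one] at hDc
    obtain ⟨x, rfl⟩ := hDc
    -- the vertex other than x has no neighbor
    rcases hall x with rfl | rfl
    · obtain ⟨z, hz, hadj⟩ := hdom b (by simpa using (Ne.symm hab))
      rw [Set.mem_singleton_iff] at hz
      rw [hz] at hadj
      exact hnadj hadj.symm
    · obtain ⟨z, hz, hadj⟩ := hdom a (by simpa using hab)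
      rw [Set.mem_singleton_iff] at hz
      rw [hz] at hadj
      exact hnadj hadj
  omega

/-- For a nontrivial graph `G`, `η(G) + η(Ḡ) = 3` iff `G ≅ K₂` or `G ≅ K̄₂`. -/
theorem mldNum_sum_eq_three_iff {V : Type*} [Fintype V] (G : SimpleGraph V)
    (hn : 2 ≤ Fintype.card V) :
    mldNum G + mldNum Gᶜ = 3 ↔
      Nonempty (G ≃g (⊤ : SimpleGraph (Fin 2))) ∨
      Nonempty (G ≃g (⊥ : SimpleGraph (Fin 2))) := by
  classical
  constructor
  · intro h
    have hG0 := mld_ne_zero G hn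
    have hGc0 := mld_ne_zero Gᶜ hn
    have hcard : Fintype.card V = 2 := by
      have h1 : mldNum G = 1 ∨ mldNum Gᶜ = 1 := by omega
      rcases h1 with h1 | h1
      · exact le_antisymm (card_le_two_of_mld_eq_one G h1) hn
      · exact le_antisymm (card_le_two_of_mld_eq_one Gᶜ h1) hn
    obtain ⟨a, b, hab, huniv⟩ := (Nat.card_eq_two_iff (α := V)).mp
      (by rw [Nat.card_eq_fintype_card]; exact hcard)
    have hall : ∀ v : V, v = a ∨ v = b := by
      intro v
      have : v ∈ ({a, b} : Set V) := huniv ▸ Set.mem_univ v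
      simpa using this
    let e : V ≃ Fin 2 :=
      { toFun := fun v => if v = a then 0 else 1
        invFun := fun i => if i = 0 then a else b
        left_inv := by
          intro v
          rcases hall v with rfl | rfl
          · simp
          · simp [hab.symm]
        right_inv := by
          intro i
          fin_cases i
          · simp
          · simp [hab.symm] }
    by_cases hadj : G.Adj a b
    · left
      refine ⟨⟨e, ?_⟩⟩
      intro u v
      rw [SimpleGraph.top_adj]
      constructor
      · intro huv
        have huv' : u ≠ v := fun hh => huv (by rw [hh])
        rcases hall u with rfl | rfl <;> rcases hall v with rfl | rfl
        · exact absurd rfl huv'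
        · exact hadj
        · exact hadj.symm
        · exact absurd rfl huv'
      · exact fun h hh => h.ne (e.injective hh)
    · right
      refine ⟨⟨e, ?_⟩⟩
      intro u v
      rw [SimpleGraph.bot_adj]
      constructor
      · exact fun h => h.elim
      · intro h
        rcases hall u with rfl | rfl <;> rcases hall v with rfl | rfl
        · exact h.ne rfl
        · exact hadj h
        · exact hadj h.symm
        · exact h.ne rfl
  · intro h
    have hcardiso : ∀ (H : SimpleGraph (Fin 2)), (G ≃g H) → Fintype.card V = 2 := by
      intro H e
      rw [Fintype.card_congr e.toEquiv]
      simp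
    obtain he | he := h
    · obtain ⟨e⟩ := he
      have hcard := hcardiso _ e
      obtain ⟨a, b, hab, huniv⟩ := (Nat.card_eq_two_iff (α := V)).mp
        (by rw [Nat.card_eq_fintype_card]; exact hcard)
      have hall : ∀ v : V, v = a ∨ v = b := by
        intro v
        have : v ∈ ({a, b} : Set V) := huniv ▸ Set.mem_univ v
        simpa using this
      have hadj : G.Adj a b := by
        rw [← e.map_rel_iff, SimpleGraph.top_adj]
        exact fun hh => hab (e.toEquiv.injective hh)
      have h1 := mld_eq_one_of_adj G a b hab hall hadj
      have h2 := mld_eq_two_of_not_adj Gᶜ a b hab hall hcard (by simp [hadj])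
      omega
    · obtain ⟨e⟩ := he
      have hcard := hcardiso _ e
      obtain ⟨a, b, hab, huniv⟩ := (Nat.card_eq_two_iff (α := V)).mp
        (by rw [Nat.card_eq_fintype_card]; exact hcard)
      have hall : ∀ v : V, v = a ∨ v = b := by
        intro v
        have : v ∈ ({a, b} : Set V) := huniv ▸ Set.mem_univ v
        simpa using this
      have hnadj : ¬ G.Adj a b := fun hh => (e.map_rel_iff.mpr hh : (⊥ : SimpleGraph (Fin 2)).Adj _ _)
      have h1 := mld_eq_two_of_not_adj G a b hab hall hcard hnadj
      have h2 := mld_eq_one_of_adj Gᶜ a b hab hall ((G.compl_adj a b).mpr ⟨hab, hnadj⟩)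
      omega
end

section
/- For every doubly-connected graph G of order n ≥ 5, 4 ≤ η(G) + η(Ḡ) ≤ 2n − 5. -/
open SimpleGraph

set_option linter.unusedSectionVars false

section NGAux

variable {V : Type*} {G : SimpleGraph V}

def Asep (G : SimpleGraph V) (u v w : V) : Prop :=
  w ≠ u ∧ w ≠ v ∧ ¬(G.Adj u w ↔ G.Adj v w)

def SepW (G : SimpleGraph V) (x y z u v : V) : Prop :=
  ∃ w, w ≠ x ∧ w ≠ y ∧ w ≠ z ∧ Asep G u v w

def DomT (G : SimpleGraph V) (x y z : V) : Prop :=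
  (∃ s, s ≠ x ∧ s ≠ y ∧ s ≠ z ∧ G.Adj x s) ∧
  (∃ s, s ≠ x ∧ s ≠ y ∧ s ≠ z ∧ G.Adj y s) ∧
  (∃ s, s ≠ x ∧ s ≠ y ∧ s ≠ z ∧ G.Adj z s)

def Good (G : SimpleGraph V) (x y z : V) : Prop :=
  x ≠ y ∧ x ≠ z ∧ y ≠ z ∧
  SepW G x y z x y ∧ SepW G x y z x z ∧ SepW G x y z y z ∧
  (DomT G x y z ∨ DomT Gᶜ x y z)

variable {G : SimpleGraph V}

lemma asep_compl {u v w : V} (h : Asep G u v w) : Asep Gᶜ u v w := by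
  obtain ⟨h1, h2, h3⟩ := h
  refine ⟨h1, h2, ?_⟩
  have hu : u ≠ w := Ne.symm h1
  have hv : v ≠ w := Ne.symm h2
  simp only [compl_adj]
  tauto

lemma sepW_compl {x y z u v : V} (h : SepW G x y z u v) : SepW Gᶜ x y z u v := by
  obtain ⟨w, h1, h2, h3, h4⟩ := h
  exact ⟨w, h1, h2, h3, asep_compl h4⟩

lemma good_compl {x y z : V} (h : Good Gᶜ x y z) : Good G x y z := by
  obtain ⟨h1, h2, h3, s1, s2, s3, hd⟩ := h
  have hcc : Gᶜᶜ = G := compl_compl G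
  refine ⟨h1, h2, h3, ?_, ?_, ?_, ?_⟩
  · have := sepW_compl (G := Gᶜ) s1; rwa [hcc] at this
  · have := sepW_compl (G := Gᶜ) s2; rwa [hcc] at this
  · have := sepW_compl (G := Gᶜ) s3; rwa [hcc] at this
  · rcases hd with h | h
    · exact Or.inr h
    · rw [hcc] at h; exact Or.inl h

lemma walk_closed' {S : Set V} (hS : ∀ ⦃a b : V⦄, a ∈ S → G.Adj a b → b ∈ S)
    {a b : V} (w : G.Walk a b) (ha : a ∈ S) : b ∈ S := by
  induction w with
  | nil => exact ha
  | cons h p ih => exact ih (hS ha h)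

lemma exists_adj_of_walk' {a b : V} (w : G.Walk a b) (hab : a ≠ b) : ∃ c, G.Adj a c := by
  cases w with
  | nil => exact absurd rfl hab
  | cons h _ => exact ⟨_, h⟩

lemma exists_adj' [Fintype V] (hG : G.Connected) (hcard : 2 ≤ Fintype.card V) (v : V) :
    ∃ u, G.Adj v u := by
  obtain ⟨u, hu⟩ := Fintype.exists_ne_of_one_lt_card (by omega) v
  obtain ⟨w⟩ := hG.preconnected v u
  exact exists_adj_of_walk' w (Ne.symm hu)

variable [Fintype V]

/-- Lemma FT: if `u,v` are (false) twins with identical neighbourhoods, WIN. -/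
lemma good_FT (hG : G.Connected) (hGc : Gᶜ.Connected) (hn : 5 ≤ Fintype.card V)
    {u v : V} (huv : u ≠ v) (htw : ∀ t, G.Adj u t ↔ G.Adj v t) :
    ∃ x y z, Good G x y z := by
  classical
  have hcard2 : 2 ≤ Fintype.card V := by omega
  have hnadj : ¬G.Adj u v := fun h => G.irrefl ((htw v).mp h)
  have hnadj' : ¬G.Adj v u := fun h => hnadj h.symm
  obtain ⟨s, hs⟩ := exists_adj' hG hcard2 u
  have hvs : G.Adj v s := (htw s).mp hs
  have hus : u ≠ s := hs.ne
  have hvs' : v ≠ s := hvs.ne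
  by_cases hN2 : ∃ p, G.Adj u p ∧ p ≠ s
  case neg =>
    -- |N(u)| = 1 : N(u) = {s}
    push_neg at hN2
    have hNu : ∀ t, G.Adj u t ↔ t = s := fun t => ⟨hN2 t, fun h => h ▸ hs⟩
    have hNv : ∀ t, G.Adj v t ↔ t = s := fun t => (htw t).symm.trans (hNu t)
    obtain ⟨m, hm⟩ := exists_adj' hGc hcard2 s
    rw [compl_adj] at hm
    have hfind : ∃ p t m', p ≠ u ∧ p ≠ v ∧ p ≠ s ∧ G.Adj p t ∧ t ≠ s ∧
        ¬G.Adj s m' ∧ m' ≠ s ∧ m' ≠ p := by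
      by_cases hMM : ∃ m₂, m₂ ≠ s ∧ ¬G.Adj s m₂ ∧ m₂ ≠ m
      · obtain ⟨m₂, hm₂s, hm₂, hm₂m⟩ := hMM
        by_cases hPP : ∃ p t, p ≠ u ∧ p ≠ v ∧ p ≠ s ∧ G.Adj p t ∧ t ≠ s
        · obtain ⟨p, t, h1, h2, h3, h4, h5⟩ := hPP
          by_cases hpm : p = m
          · exact ⟨p, t, m₂, h1, h2, h3, h4, h5, hm₂, hm₂s,
              fun h => hm₂m (h.trans hpm)⟩
          · exact ⟨p, t, m, h1, h2, h3, h4, h5, hm.2, Ne.symm hm.1,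
              fun h => hpm h.symm⟩
        · exfalso
          push_neg at hPP
          apply hm.2
          have hmu : m ≠ u := fun h => hm.2 (by rw [h]; exact hs.symm)
          have hmv : m ≠ v := fun h => hm.2 (by rw [h]; exact hvs.symm)
          obtain ⟨t, ht⟩ := exists_adj' hG hcard2 m
          have hts := hPP m t hmu hmv (Ne.symm hm.1) ht
          exact (hts ▸ ht).symm
      · push_neg at hMM
        obtain ⟨r, hr⟩ := exists_adj' hG hcard2 m
        have hrs : r ≠ s := fun h => hm.2 ((h ▸ hr).symm)
        have hru : r ≠ u := fun h => (Ne.symm hm.1) ((hNu m).mp (h ▸ hr).symm)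
        have hrv : r ≠ v := fun h => (Ne.symm hm.1) ((hNv m).mp (h ▸ hr).symm)
        exact ⟨r, m, m, hru, hrv, hrs, hr.symm, Ne.symm hm.1, hm.2,
          Ne.symm hm.1, hr.ne⟩
    obtain ⟨p, t, m', hpu, hpv, hps, hpt, hts, hsm', hm's, hm'p⟩ := hfind
    -- T = {v, s, p}, dominated in Gᶜ
    refine ⟨v, s, p, hvs', Ne.symm hpv, Ne.symm hps, ?_, ?_, ?_, Or.inr ⟨?_, ?_, ?_⟩⟩
    · -- SepW (v,s) via u
      exact ⟨u, huv, hus, Ne.symm hpu, huv, hus,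
        fun hiff => hus ((hNv u).mp (hiff.mpr hs.symm))⟩
    · -- SepW (v,p) via t
      have htv : t ≠ v := fun h => hps ((hNv p).mp (h ▸ hpt).symm)
      exact ⟨t, htv, hts, Ne.symm hpt.ne, htv, Ne.symm hpt.ne,
        fun hiff => hts ((hNv t).mp (hiff.mpr hpt))⟩
    · -- SepW (s,p) via u
      exact ⟨u, huv, hus, Ne.symm hpu, hus, Ne.symm hpu,
        fun hiff => hps ((hNu p).mp (hiff.mp hs.symm).symm)⟩
    · -- dom v via u
      refine ⟨u, huv, hus, Ne.symm hpu, ?_⟩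
      rw [compl_adj]; exact ⟨Ne.symm huv, hnadj'⟩
    · -- dom s via m'
      have hm'v : m' ≠ v := fun h => hsm' (by rw [h]; exact hvs.symm)
      refine ⟨m', hm'v, hm's, hm'p, ?_⟩
      rw [compl_adj]; exact ⟨Ne.symm hm's, hsm'⟩
    · -- dom p via u
      refine ⟨u, huv, hus, Ne.symm hpu, ?_⟩
      rw [compl_adj]
      exact ⟨hpu, fun h => hps ((hNu p).mp h.symm)⟩
  case pos =>
    obtain ⟨p₀, hp₀, hp₀s⟩ := hN2
    by_cases h2a : ∃ ℓ c, ℓ ≠ u ∧ ℓ ≠ v ∧ G.Adj u c ∧ (∀ t, G.Adj ℓ t ↔ t = c)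
    · obtain ⟨ℓ, c, hℓu, hℓv, huc, hℓiff⟩ := h2a
      have hℓc : G.Adj ℓ c := (hℓiff c).mpr rfl
      have hcu : c ≠ u := huc.ne'
      have hℓnotN : ¬G.Adj u ℓ := fun h => hcu ((hℓiff u).mp h.symm).symm
      obtain ⟨p₁, hup₁, hp₁c⟩ : ∃ p₁, G.Adj u p₁ ∧ p₁ ≠ c := by
        by_cases h : p₀ = c
        · exact ⟨s, hs, fun hsc => hp₀s (by rw [h, ← hsc])⟩
        · exact ⟨p₀, hp₀, h⟩
      have hvc : v ≠ c := fun h => hnadj (h ▸ huc)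
      have hvℓ : v ≠ ℓ := by
        intro h
        have h1 : G.Adj v p₁ := (htw p₁).mp hup₁
        rw [h] at h1
        exact hp₁c ((hℓiff p₁).mp h1)
      have hvcadj : G.Adj c v := ((htw c).mp huc).symm
      -- T = {u, ℓ, c}, dominated in Gᶜ
      refine ⟨u, ℓ, c, Ne.symm hℓu, Ne.symm hcu, hℓc.ne, ?_, ?_, ?_,
        Or.inr ⟨?_, ?_, ?_⟩⟩
      · -- SepW (u,ℓ) via p₁
        have hp₁ℓ : p₁ ≠ ℓ := fun h => hℓnotN (h ▸ hup₁)
        exact ⟨p₁, hup₁.ne', hp₁ℓ, hp₁c, hup₁.ne', hp₁ℓ,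
          fun hiff => hp₁c ((hℓiff p₁).mp (hiff.mp hup₁))⟩
      · -- SepW (u,c) via v
        exact ⟨v, Ne.symm huv, hvℓ, hvc, Ne.symm huv, hvc,
          fun hiff => hnadj (hiff.mpr hvcadj)⟩
      · -- SepW (ℓ,c) via v
        exact ⟨v, Ne.symm huv, hvℓ, hvc, hvℓ, hvc,
          fun hiff => hvc ((hℓiff v).mp (hiff.mpr hvcadj))⟩
      · refine ⟨v, Ne.symm huv, hvℓ, hvc, ?_⟩
        rw [compl_adj]; exact ⟨huv, hnadj⟩
      · refine ⟨v, Ne.symm huv, hvℓ, hvc, ?_⟩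
        rw [compl_adj]
        exact ⟨hℓv, fun h => hvc ((hℓiff v).mp h)⟩
      · obtain ⟨d, hd⟩ := exists_adj' hGc hcard2 c
        rw [compl_adj] at hd
        have hdu : d ≠ u := fun h => hd.2 (by rw [h]; exact huc.symm)
        have hdℓ : d ≠ ℓ := fun h => hd.2 (by rw [h]; exact hℓc.symm)
        refine ⟨d, hdu, hdℓ, Ne.symm hd.1, ?_⟩
        rw [compl_adj]; exact hd
    by_cases h2b : ∃ w s₁, ¬G.Adj u w ∧ w ≠ u ∧ w ≠ v ∧ s₁ ≠ u ∧ s₁ ≠ w ∧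
        ¬(G.Adj u s₁ ↔ G.Adj w s₁)
    · obtain ⟨w, s₁, hnuw, hwu, hwv, hs₁u, hs₁w, hs₁⟩ := h2b
      obtain ⟨p, q, hup, huq, hpq, hps₁⟩ :
          ∃ p q, G.Adj u p ∧ G.Adj u q ∧ p ≠ q ∧ p ≠ s₁ := by
        by_cases h : p₀ = s₁
        · exact ⟨s, p₀, hs, hp₀, fun hh => hp₀s hh.symm,
            fun hh => hp₀s (by rw [h, ← hh])⟩
        · exact ⟨p₀, s, hp₀, hs, hp₀s, h⟩
      have hvp : v ≠ p := fun h => hnadj (h ▸ hup)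
      have hwp : w ≠ p := fun h => hnuw (h ▸ hup)
      have hpv : G.Adj p v := ((htw p).mp hup).symm
      -- T = {u, p, w}, dominated in G
      refine ⟨u, p, w, hup.ne, Ne.symm hwu, Ne.symm hwp, ?_, ?_, ?_,
        Or.inl ⟨?_, ?_, ?_⟩⟩
      · -- SepW (u,p) via v
        exact ⟨v, Ne.symm huv, hvp, Ne.symm hwv, Ne.symm huv, hvp,
          fun hiff => hnadj (hiff.mpr hpv)⟩
      · -- SepW (u,w) via s₁
        exact ⟨s₁, hs₁u, Ne.symm hps₁, hs₁w, hs₁u, hs₁w, hs₁⟩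
      · -- SepW (p,w) via v
        exact ⟨v, Ne.symm huv, hvp, Ne.symm hwv, hvp, Ne.symm hwv,
          fun hiff => hnuw ((htw w).mpr (hiff.mp hpv).symm)⟩
      · -- dom u via q
        have hqw : q ≠ w := fun h => hnuw (h ▸ huq)
        exact ⟨q, huq.ne', Ne.symm hpq, hqw, huq⟩
      · -- dom p via v
        exact ⟨v, Ne.symm huv, hvp, Ne.symm hwv, hpv⟩
      · -- dom w
        obtain ⟨t₀, ht₀⟩ := exists_adj' hG hcard2 w
        have ht₀u : t₀ ≠ u := fun h => hnuw (h ▸ ht₀).symm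
        have ht₀w : t₀ ≠ w := ht₀.ne'
        by_cases ht₀p : t₀ = p
        · by_contra hno
          push_neg at hno
          apply h2a
          refine ⟨w, p, hwu, hwv, hup, fun t => ⟨?_, ?_⟩⟩
          · intro hAdj
            by_contra htp
            have htu : t ≠ u := fun h => hnuw (h ▸ hAdj).symm
            exact hno t htu htp hAdj.ne' hAdj
          · intro h
            rw [h, ← ht₀p]
            exact ht₀
        · exact ⟨t₀, ht₀u, ht₀p, ht₀w, ht₀⟩
    · -- 2c : contradiction with Gᶜ connected
      exfalso
      push_neg at h2b
      have hU : ∀ w, ¬G.Adj u w → w ≠ u → ∀ t, t ≠ u → t ≠ w →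
          (G.Adj u t ↔ G.Adj w t) := by
        intro w hw hwu t htu htw'
        by_cases hwv : w = v
        · subst hwv; exact htw t
        · exact h2b w t hw hwu hwv htu htw'
      have hclosed : ∀ ⦃a b : V⦄, a ∈ {c | ¬G.Adj u c} → Gᶜ.Adj a b →
          b ∈ {c | ¬G.Adj u c} := by
        intro a b ha hab
        rw [compl_adj] at hab
        simp only [Set.mem_setOf_eq] at ha ⊢
        intro hub
        by_cases hau : a = u
        · exact hab.2 (hau ▸ hub)
        · exact hab.2 ((hU a ha hau b hub.ne' (Ne.symm hab.1)).mp hub)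
      obtain ⟨wk⟩ := hGc.preconnected u s
      have : s ∈ {c | ¬G.Adj u c} :=
        walk_closed' hclosed wk (fun h => G.irrefl h)
      exact this hs

lemma good_of_indep (hG : G.Connected) (hcard : 2 ≤ Fintype.card V)
    (htf : ∀ a b : V, a ≠ b → ∃ w, w ≠ a ∧ w ≠ b ∧ ¬(G.Adj a w ↔ G.Adj b w))
    {x y z : V} (hxy : x ≠ y) (hxz : x ≠ z) (hyz : y ≠ z)
    (nxy : ¬G.Adj x y) (nxz : ¬G.Adj x z) (nyz : ¬G.Adj y z) : Good G x y z := by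
  obtain ⟨sx, hsx⟩ := exists_adj' hG hcard x
  obtain ⟨sy, hsy⟩ := exists_adj' hG hcard y
  obtain ⟨sz, hsz⟩ := exists_adj' hG hcard z
  refine ⟨hxy, hxz, hyz, ?_, ?_, ?_, Or.inl ⟨?_, ?_, ?_⟩⟩
  · obtain ⟨w, hwa, hwb, hw⟩ := htf x y hxy
    have hwc : w ≠ z := fun h => hw (h ▸ iff_of_false nxz nyz)
    exact ⟨w, hwa, hwb, hwc, hwa, hwb, hw⟩
  · obtain ⟨w, hwa, hwb, hw⟩ := htf x z hxz
    have hwc : w ≠ y := fun h =>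
      hw (h ▸ iff_of_false nxy (fun hh => nyz hh.symm))
    exact ⟨w, hwa, hwc, hwb, hwa, hwb, hw⟩
  · obtain ⟨w, hwa, hwb, hw⟩ := htf y z hyz
    have hwc : w ≠ x := fun h =>
      hw (h ▸ iff_of_false (fun hh => nxy hh.symm) (fun hh => nxz hh.symm))
    exact ⟨w, hwc, hwa, hwb, hwa, hwb, hw⟩
  · exact ⟨sx, hsx.ne', fun h => nxy (h ▸ hsx), fun h => nxz (h ▸ hsx), hsx⟩
  · exact ⟨sy, fun h => nxy (h ▸ hsy).symm, hsy.ne', fun h => nyz (h ▸ hsy), hsy⟩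
  · exact ⟨sz, fun h => nxz (h ▸ hsz).symm, fun h => nyz (h ▸ hsz).symm,
      hsz.ne', hsz⟩

lemma htf_compl
    (htf : ∀ a b : V, a ≠ b → ∃ w, w ≠ a ∧ w ≠ b ∧ ¬(G.Adj a w ↔ G.Adj b w)) :
    ∀ a b : V, a ≠ b → ∃ w, w ≠ a ∧ w ≠ b ∧ ¬(Gᶜ.Adj a w ↔ Gᶜ.Adj b w) := by
  intro a b hab
  obtain ⟨w, h1, h2, h3⟩ := htf a b hab
  obtain ⟨x1, x2, x3⟩ := asep_compl (G := G) ⟨h1, h2, h3⟩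
  exact ⟨w, x1, x2, x3⟩

lemma good_of_three (hG : G.Connected) (hGc : Gᶜ.Connected)
    (hcard : 2 ≤ Fintype.card V)
    (htf : ∀ a b : V, a ≠ b → ∃ w, w ≠ a ∧ w ≠ b ∧ ¬(G.Adj a w ↔ G.Adj b w))
    {v a b c : V} (hab : a ≠ b) (hac : a ≠ c) (hbc : b ≠ c)
    (hva : G.Adj v a) (hvb : G.Adj v b) (hvc : G.Adj v c) :
    ∃ x y z, Good G x y z := by
  have tri : ∀ p q : V, G.Adj v p → G.Adj v q → p ≠ q → G.Adj p q →
      ∃ x y z, Good G x y z := by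
    intro p q hvp hvq hpq hpadj
    refine ⟨v, p, q, good_compl (good_of_indep hGc hcard (htf_compl htf)
      hvp.ne hvq.ne hpq ?_ ?_ ?_)⟩
    · rw [compl_adj]; push_neg; intro _; exact hvp
    · rw [compl_adj]; push_neg; intro _; exact hvq
    · rw [compl_adj]; push_neg; intro _; exact hpadj
  by_cases h1 : G.Adj a b
  · exact tri a b hva hvb hab h1
  by_cases h2 : G.Adj a c
  · exact tri a c hva hvc hac h2
  by_cases h3 : G.Adj b c
  · exact tri b c hvb hvc hbc h3
  · exact ⟨a, b, c, good_of_indep hG hcard htf hab hac hbc h1 h2 h3⟩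

/-- the pentagon construction -/
lemma good_C5 {v a b x y : V}
    (hva' : v ≠ a) (hvy' : v ≠ y) (hay' : a ≠ y)
    (hbv : b ≠ v) (hba : b ≠ a) (hby' : b ≠ y)
    (hxv : x ≠ v) (hxa : x ≠ a) (hxy' : x ≠ y)
    (hvb : G.Adj v b) (hab : ¬G.Adj a b) (hvx : ¬G.Adj v x)
    (hxy : G.Adj x y) (hby : G.Adj b y) (hax : G.Adj a x) :
    Good G v a y := by
  refine ⟨hva', hvy', hay', ?_, ?_, ?_, Or.inl ⟨?_, ?_, ?_⟩⟩
  · exact ⟨b, hbv, hba, hby', hbv, hba, fun hiff => hab (hiff.mp hvb)⟩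
  · exact ⟨x, hxv, hxa, hxy', hxv, hxy', fun hiff => hvx (hiff.mpr hxy.symm)⟩
  · exact ⟨b, hbv, hba, hby', hba, hby', fun hiff => hab (hiff.mpr hby.symm)⟩
  · exact ⟨b, hbv, hba, hby', hvb⟩
  · exact ⟨x, hxv, hxa, hxy', hax⟩
  · exact ⟨x, hxv, hxa, hxy', hxy.symm⟩

theorem good_exists (hG : G.Connected) (hGc : Gᶜ.Connected)
    (hn : 5 ≤ Fintype.card V) : ∃ x y z, Good G x y z := by
  classical
  have hccG : Gᶜᶜ = G := compl_compl G
  have hGc' : Gᶜᶜ.Connected := by rwa [hccG]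
  have hcard2 : 2 ≤ Fintype.card V := by omega
  by_cases htwins : ∃ u v : V, u ≠ v ∧ ∀ w, w ≠ u → w ≠ v → (G.Adj u w ↔ G.Adj v w)
  · obtain ⟨u, v, huv, htww⟩ := htwins
    by_cases hadj : G.Adj u v
    · -- true twins : apply FT to Gᶜ
      have htwc : ∀ t, Gᶜ.Adj u t ↔ Gᶜ.Adj v t := by
        intro t
        by_cases htu : t = u
        · subst htu
          exact iff_of_false (Gᶜ.irrefl) (fun h => (compl_adj _ _ _ |>.mp h).2 hadj.symm)
        by_cases htv : t = v
        · subst htv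
          exact iff_of_false (fun h => (compl_adj _ _ _ |>.mp h).2 hadj) (Gᶜ.irrefl)
        · simp only [compl_adj]
          exact ⟨fun ⟨_, h2⟩ => ⟨Ne.symm htv, fun hh => h2 ((htww t htu htv).mpr hh)⟩,
            fun ⟨_, h2⟩ => ⟨Ne.symm htu, fun hh => h2 ((htww t htu htv).mp hh)⟩⟩
      obtain ⟨x, y, z, hgood⟩ := good_FT hGc hGc' hn huv htwc
      exact ⟨x, y, z, good_compl hgood⟩
    · -- false twins in G
      have htwfull : ∀ t, G.Adj u t ↔ G.Adj v t := by
        intro t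
        by_cases htu : t = u
        · subst htu
          exact iff_of_false (G.irrefl) (fun h => hadj h.symm)
        by_cases htv : t = v
        · subst htv
          exact iff_of_false hadj (G.irrefl)
        · exact htww t htu htv
      exact good_FT hG hGc hn huv htwfull
  · push_neg at htwins
    have htf : ∀ a b : V, a ≠ b → ∃ w, w ≠ a ∧ w ≠ b ∧ ¬(G.Adj a w ↔ G.Adj b w) := by
      intro a b hab
      obtain ⟨w, h1, h2, h3⟩ := htwins a b hab
      exact ⟨w, h1, h2, by tauto⟩
    by_cases h3 : ∃ w a b c : V, a ≠ b ∧ a ≠ c ∧ b ≠ c ∧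
        G.Adj w a ∧ G.Adj w b ∧ G.Adj w c
    · obtain ⟨w, a, b, c, h1, h2, h3', h4, h5, h6⟩ := h3
      exact good_of_three hG hGc hcard2 htf h1 h2 h3' h4 h5 h6
    by_cases h3c : ∃ w a b c : V, a ≠ b ∧ a ≠ c ∧ b ≠ c ∧
        Gᶜ.Adj w a ∧ Gᶜ.Adj w b ∧ Gᶜ.Adj w c
    · obtain ⟨w, a, b, c, h1, h2, h3', h4, h5, h6⟩ := h3c
      obtain ⟨x, y, z, hg⟩ := good_of_three hGc hGc' hcard2 (htf_compl htf)
        h1 h2 h3' h4 h5 h6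
      exact ⟨x, y, z, good_compl hg⟩
    · -- pentagon endgame
      have hdeg : ∀ w : V, (G.neighborFinset w).card ≤ 2 := by
        intro w
        by_contra hgt
        push_neg at hgt
        obtain ⟨a, b, c, ha, hb, hc, hab, hac, hbc⟩ := Finset.two_lt_card_iff.mp hgt
        rw [mem_neighborFinset] at ha hb hc
        exact h3 ⟨w, a, b, c, hab, hac, hbc, ha, hb, hc⟩
      have hdegc : ∀ w : V, (Gᶜ.neighborFinset w).card ≤ 2 := by
        intro w
        by_contra hgt
        push_neg at hgt
        obtain ⟨a, b, c, ha, hb, hc, hab, hac, hbc⟩ := Finset.two_lt_card_iff.mp hgt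
        rw [mem_neighborFinset] at ha hb hc
        exact h3c ⟨w, a, b, c, hab, hac, hbc, ha, hb, hc⟩
      have huniv : ∀ w : V, (Finset.univ : Finset V) =
          insert w (G.neighborFinset w ∪ Gᶜ.neighborFinset w) := by
        intro w
        ext t
        simp only [Finset.mem_univ, true_iff, Finset.mem_insert, Finset.mem_union,
          mem_neighborFinset, compl_adj]
        by_cases h : t = w
        · exact Or.inl h
        · by_cases h2 : G.Adj w t
          · exact Or.inr (Or.inl h2)
          · exact Or.inr (Or.inr ⟨fun hh => h hh.symm, h2⟩)
      have hdeg2 : ∀ w : V, (G.neighborFinset w).card = 2 ∧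
          (Gᶜ.neighborFinset w).card = 2 := by
        intro w
        have h1 := hdeg w
        have h2 := hdegc w
        have hle : Fintype.card V ≤
            1 + ((G.neighborFinset w).card + (Gᶜ.neighborFinset w).card) := by
          calc Fintype.card V = (Finset.univ : Finset V).card := Finset.card_univ.symm
            _ = (insert w (G.neighborFinset w ∪ Gᶜ.neighborFinset w)).card := by
                rw [← huniv w]
            _ ≤ (G.neighborFinset w ∪ Gᶜ.neighborFinset w).card + 1 :=
                Finset.card_insert_le _ _
            _ ≤ ((G.neighborFinset w).card + (Gᶜ.neighborFinset w).card) + 1 := by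
                have := Finset.card_union_le (G.neighborFinset w) (Gᶜ.neighborFinset w)
                omega
            _ = 1 + ((G.neighborFinset w).card + (Gᶜ.neighborFinset w).card) := by omega
        omega
      obtain ⟨v⟩ : Nonempty V := Fintype.card_pos_iff.mp (by omega)
      obtain ⟨a, b, hab, hNab⟩ := Finset.card_eq_two.mp (hdeg2 v).1
      obtain ⟨x, y, hxy, hNxy⟩ := Finset.card_eq_two.mp (hdeg2 v).2
      have hva : G.Adj v a := by
        rw [← mem_neighborFinset, hNab]; exact Finset.mem_insert_self a {b}
      have hvb : G.Adj v b := by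
        rw [← mem_neighborFinset, hNab]
        exact Finset.mem_insert_of_mem (Finset.mem_singleton_self b)
      have hvx : Gᶜ.Adj v x := by
        rw [← mem_neighborFinset, hNxy]; exact Finset.mem_insert_self x {y}
      have hvy : Gᶜ.Adj v y := by
        rw [← mem_neighborFinset, hNxy]
        exact Finset.mem_insert_of_mem (Finset.mem_singleton_self y)
      rw [compl_adj] at hvx hvy
      have hnvx := hvx.2
      have hnvy := hvy.2
      have hxv : x ≠ v := Ne.symm hvx.1
      have hyv : y ≠ v := Ne.symm hvy.1
      have hax : a ≠ x := fun h => hnvx (h ▸ hva)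
      have hay : a ≠ y := fun h => hnvy (h ▸ hva)
      have hbx : b ≠ x := fun h => hnvx (h ▸ hvb)
      have hby : b ≠ y := fun h => hnvy (h ▸ hvb)
      have hmemall : ∀ t : V, t = v ∨ t = a ∨ t = b ∨ t = x ∨ t = y := by
        intro t
        have := huniv v
        have ht := Finset.mem_univ t
        rw [this] at ht
        simp only [Finset.mem_insert, Finset.mem_union, mem_neighborFinset,
          ← mem_neighborFinset, hNab, hNxy, Finset.mem_singleton] at ht
        tauto
      have no3 : ∀ t p q r : V, G.Adj t p → G.Adj t q → G.Adj t r →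
          p ≠ q → p ≠ r → q ≠ r → False :=
        fun t p q r hp hq hr h1 h2 h3' => h3 ⟨t, p, q, r, h1, h2, h3', hp, hq, hr⟩
      by_cases hAB : G.Adj a b
      · refine ⟨v, a, b, good_compl (good_of_indep hGc hcard2 (htf_compl htf)
          hva.ne hvb.ne hab ?_ ?_ ?_)⟩
        · rw [compl_adj]; push_neg; intro _; exact hva
        · rw [compl_adj]; push_neg; intro _; exact hvb
        · rw [compl_adj]; push_neg; intro _; exact hAB
      by_cases hXY : G.Adj x y
      case neg =>
        exact ⟨v, x, y, good_of_indep hG hcard2 htf (Ne.symm hxv) (Ne.symm hyv)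
          hxy hnvx hnvy hXY⟩
      case pos =>
      -- a is adjacent to exactly one of x, y
      have haxy : G.Adj a x ∨ G.Adj a y := by
        by_contra hno
        push_neg at hno
        obtain ⟨a1, a2, h12, hNt⟩ := Finset.card_eq_two.mp (hdeg2 a).1
        have m1 : G.Adj a a1 := by
          rw [← mem_neighborFinset, hNt]; exact Finset.mem_insert_self a1 {a2}
        have m2 : G.Adj a a2 := by
          rw [← mem_neighborFinset, hNt]
          exact Finset.mem_insert_of_mem (Finset.mem_singleton_self a2)
        have e : ∀ s : V, G.Adj a s → s = v := by
          intro s hsadj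
          rcases hmemall s with h | h | h | h | h
          · exact h
          · exact absurd (h ▸ hsadj) (G.irrefl)
          · exact absurd (h ▸ hsadj) hAB
          · exact absurd (h ▸ hsadj) hno.1
          · exact absurd (h ▸ hsadj) hno.2
        exact h12 ((e a1 m1).trans (e a2 m2).symm)
      have hnboth : ¬(G.Adj a x ∧ G.Adj a y) := by
        rintro ⟨h1, h2⟩
        exact no3 a v x y hva.symm h1 h2 (Ne.symm hxv) (Ne.symm hyv) hxy
      -- helper : get the second neighbour of b
      have forceb : ∀ c : V, ¬G.Adj b c → c ≠ v → c ≠ b → G.Adj b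
          (if c = x then y else x) → True := fun _ _ _ _ _ => trivial
      rcases haxy with hAX | hAY
      · -- a ~ x, hence ¬ a ~ y, and b ~ y
        have hnAY : ¬G.Adj a y := fun h => hnboth ⟨hAX, h⟩
        have hnBX : ¬G.Adj b x := by
          intro h
          exact no3 x y a b hXY hAX.symm h.symm (Ne.symm hay) (Ne.symm hby) hab
        have hBY : G.Adj b y := by
          obtain ⟨b1, b2, h12, hNt⟩ := Finset.card_eq_two.mp (hdeg2 b).1
          have m1 : G.Adj b b1 := by
            rw [← mem_neighborFinset, hNt]; exact Finset.mem_insert_self b1 {b2}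
          have m2 : G.Adj b b2 := by
            rw [← mem_neighborFinset, hNt]
            exact Finset.mem_insert_of_mem (Finset.mem_singleton_self b2)
          have e : ∀ s : V, G.Adj b s → s = v ∨ s = y := by
            intro s hsadj
            rcases hmemall s with h | h | h | h | h
            · exact Or.inl h
            · exact absurd (h ▸ hsadj).symm hAB
            · exact absurd (h ▸ hsadj) (G.irrefl)
            · exact absurd (h ▸ hsadj) hnBX
            · exact Or.inr h
          rcases e b1 m1 with h | h
          · rcases e b2 m2 with h' | h'
            · exact absurd (h.trans h'.symm) h12
            · exact h' ▸ m2
          · exact h ▸ m1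
        exact ⟨v, a, y, good_C5 hva.ne (Ne.symm hyv) hay hvb.ne' (Ne.symm hab)
          hby hxv (Ne.symm hax) hxy hvb hAB hnvx hXY hBY hAX⟩
      · -- a ~ y, hence ¬ a ~ x, and b ~ x
        have hnAX : ¬G.Adj a x := fun h => hnboth ⟨h, hAY⟩
        have hnBY : ¬G.Adj b y := by
          intro h
          exact no3 y x a b hXY.symm hAY.symm h.symm (Ne.symm hax)
            (Ne.symm hbx) hab
        have hBX : G.Adj b x := by
          obtain ⟨b1, b2, h12, hNt⟩ := Finset.card_eq_two.mp (hdeg2 b).1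
          have m1 : G.Adj b b1 := by
            rw [← mem_neighborFinset, hNt]; exact Finset.mem_insert_self b1 {b2}
          have m2 : G.Adj b b2 := by
            rw [← mem_neighborFinset, hNt]
            exact Finset.mem_insert_of_mem (Finset.mem_singleton_self b2)
          have e : ∀ s : V, G.Adj b s → s = v ∨ s = x := by
            intro s hsadj
            rcases hmemall s with h | h | h | h | h
            · exact Or.inl h
            · exact absurd (h ▸ hsadj).symm hAB
            · exact absurd (h ▸ hsadj) (G.irrefl)
            · exact Or.inr h
            · exact absurd (h ▸ hsadj) hnBY
          rcases e b1 m1 with h | h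
          · rcases e b2 m2 with h' | h'
            · exact absurd (h.trans h'.symm) h12
            · exact h' ▸ m2
          · exact h ▸ m1
        exact ⟨v, a, x, good_C5 hva.ne (Ne.symm hxv) hax hvb.ne' (Ne.symm hab)
          hbx hyv (Ne.symm hay) (Ne.symm hxy) hvb hAB hnvy hXY.symm hBX hAY⟩

lemma edist_ne_of_asep {u v w : V} (h : ¬(G.Adj u w ↔ G.Adj v w)) :
    G.edist u w ≠ G.edist v w := by
  intro he
  exact h (by rw [← edist_eq_one_iff_adj, ← edist_eq_one_iff_adj, he])

end NGAux

section MldBounds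

variable {V : Type*} {G : SimpleGraph V} [Fintype V]

/-- key pair existence: a non-adjacent, non-false-twin pair -/
lemma exists_sep_pair (hG : G.Connected) (hGc : Gᶜ.Connected)
    (hcard : 2 ≤ Fintype.card V) :
    ∃ x y w, x ≠ y ∧ ¬G.Adj x y ∧ w ≠ x ∧ w ≠ y ∧ ¬(G.Adj x w ↔ G.Adj y w) := by
  by_contra hc
  push_neg at hc
  have key : ∀ x y : V, x ≠ y → ¬G.Adj x y → ∀ t, G.Adj x t ↔ G.Adj y t := by
    intro x y hxy hnadj t
    by_cases htx : t = x
    · subst htx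
      exact ⟨fun h => absurd h (G.irrefl), fun h => absurd h.symm hnadj⟩
    by_cases hty : t = y
    · subst hty
      exact ⟨fun h => absurd h hnadj, fun h => absurd h (G.irrefl)⟩
    · exact hc x y t hxy hnadj htx hty
  have hne : Nonempty V := by
    have : 0 < Fintype.card V := by omega
    exact Fintype.card_pos_iff.mp this
  obtain ⟨v₀⟩ := hne
  obtain ⟨w₀, hw₀⟩ := exists_adj' hG hcard v₀
  have hclosed : ∀ ⦃a b : V⦄, a ∈ {c | ∀ t, G.Adj c t ↔ G.Adj v₀ t} → Gᶜ.Adj a b →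
      b ∈ {c | ∀ t, G.Adj c t ↔ G.Adj v₀ t} := by
    intro a b ha hab
    rw [compl_adj] at hab
    intro t
    rw [← key a b hab.1 hab.2 t]
    exact ha t
  obtain ⟨wk⟩ := hGc.preconnected v₀ w₀
  have hmem : w₀ ∈ {c | ∀ t, G.Adj c t ↔ G.Adj v₀ t} :=
    walk_closed' hclosed wk (fun t => Iff.rfl)
  have : G.Adj w₀ w₀ ↔ G.Adj v₀ w₀ := hmem w₀
  exact G.irrefl (this.mpr hw₀)

lemma mldNum_le_sub_two (hG : G.Connected) (hGc : Gᶜ.Connected)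
    (hcard : 2 ≤ Fintype.card V) : mldNum G ≤ Fintype.card V - 2 := by
  classical
  obtain ⟨x, y, w, hxy, hnadj, hwx, hwy, hiff⟩ := exists_sep_pair hG hGc hcard
  obtain ⟨sx, hsx⟩ := exists_adj' hG hcard x
  obtain ⟨sy, hsy⟩ := exists_adj' hG hcard y
  have hsxx : sx ≠ x := hsx.ne'
  have hsxy : sx ≠ y := fun h => hnadj (h ▸ hsx)
  have hsyy : sy ≠ y := hsy.ne'
  have hsyx : sy ≠ x := fun h => hnadj (h ▸ hsy).symm
  apply Nat.sInf_le
  refine ⟨({x, y} : Set V)ᶜ, ?_, ⟨?_, ?_⟩, ?_⟩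
  · intro v hv
    rw [Set.notMem_compl_iff] at hv
    simp only [Set.mem_insert_iff, Set.mem_singleton_iff] at hv
    rcases hv with rfl | rfl
    · exact ⟨sx, by simp [hsxx, hsxy], hsx⟩
    · exact ⟨sy, by simp [hsyx, hsyy], hsy⟩
  · intro v hv
    rw [Set.notMem_compl_iff] at hv
    simp only [Set.mem_insert_iff, Set.mem_singleton_iff] at hv
    rcases hv with rfl | rfl
    · exact ⟨sx, by simp [hsxx, hsxy], by
        rw [edist_ne_top_iff_reachable]; exact hsx.reachable⟩
    · exact ⟨sy, by simp [hsyx, hsyy], by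
        rw [edist_ne_top_iff_reachable]; exact hsy.reachable⟩
  · intro u v huv
    by_cases hu : u ∈ ({x, y} : Set V)ᶜ
    · refine ⟨u, hu, ?_⟩
      rw [edist_self]
      intro h
      exact huv (edist_eq_zero_iff.mp h.symm).symm
    by_cases hv : v ∈ ({x, y} : Set V)ᶜ
    · refine ⟨v, hv, ?_⟩
      rw [edist_self]
      intro h
      exact huv (edist_eq_zero_iff.mp h)
    rw [Set.notMem_compl_iff] at hu hv
    simp only [Set.mem_insert_iff, Set.mem_singleton_iff] at hu hv
    have hwmem : w ∈ ({x, y} : Set V)ᶜ := by simp [hwx, hwy]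
    rcases hu with rfl | rfl <;> rcases hv with rfl | rfl
    · exact absurd rfl huv
    · exact ⟨w, hwmem, edist_ne_of_asep hiff⟩
    · exact ⟨w, hwmem, (edist_ne_of_asep hiff).symm⟩
    · exact absurd rfl huv
  · have h2 : ({x, y} : Set V).ncard = 2 := Set.ncard_pair hxy
    have := Set.ncard_add_ncard_compl ({x, y} : Set V)
    rw [h2, Nat.card_eq_fintype_card] at this
    omega


lemma mldNum_le_of_triple (G : SimpleGraph V) {x y z : V}
    (hxy : x ≠ y) (hxz : x ≠ z) (hyz : y ≠ z)
    (s1 : SepW G x y z x y) (s2 : SepW G x y z x z) (s3 : SepW G x y z y z)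
    (hdom : DomT G x y z) : mldNum G ≤ Fintype.card V - 3 := by
  classical
  apply Nat.sInf_le
  refine ⟨({x, y, z} : Set V)ᶜ, ?_, ⟨?_, ?_⟩, ?_⟩
  · -- dominating
    intro v hv
    rw [Set.notMem_compl_iff] at hv
    simp only [Set.mem_insert_iff, Set.mem_singleton_iff] at hv
    rcases hv with rfl | rfl | rfl
    · obtain ⟨s, h1, h2, h3, h4⟩ := hdom.1
      exact ⟨s, by simp [h1, h2, h3], h4⟩
    · obtain ⟨s, h1, h2, h3, h4⟩ := hdom.2.1
      exact ⟨s, by simp [h1, h2, h3], h4⟩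
    · obtain ⟨s, h1, h2, h3, h4⟩ := hdom.2.2
      exact ⟨s, by simp [h1, h2, h3], h4⟩
  · -- locating (finiteness of distance)
    intro v hv
    rw [Set.notMem_compl_iff] at hv
    simp only [Set.mem_insert_iff, Set.mem_singleton_iff] at hv
    rcases hv with rfl | rfl | rfl
    · obtain ⟨s, h1, h2, h3, h4⟩ := hdom.1
      exact ⟨s, by simp [h1, h2, h3], by
        rw [edist_ne_top_iff_reachable]; exact h4.reachable⟩
    · obtain ⟨s, h1, h2, h3, h4⟩ := hdom.2.1
      exact ⟨s, by simp [h1, h2, h3], by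
        rw [edist_ne_top_iff_reachable]; exact h4.reachable⟩
    · obtain ⟨s, h1, h2, h3, h4⟩ := hdom.2.2
      exact ⟨s, by simp [h1, h2, h3], by
        rw [edist_ne_top_iff_reachable]; exact h4.reachable⟩
  · -- locating (resolving)
    intro u v huv
    by_cases hu : u ∈ ({x, y, z} : Set V)ᶜ
    · refine ⟨u, hu, ?_⟩
      rw [edist_self]
      intro h
      exact huv (edist_eq_zero_iff.mp h.symm).symm
    by_cases hv : v ∈ ({x, y, z} : Set V)ᶜ
    · refine ⟨v, hv, ?_⟩
      rw [edist_self]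
      intro h
      exact huv (edist_eq_zero_iff.mp h)
    rw [Set.notMem_compl_iff] at hu hv
    simp only [Set.mem_insert_iff, Set.mem_singleton_iff] at hu hv
    have getw : ∀ a b : V, SepW G x y z a b →
        ∃ w ∈ ({x, y, z} : Set V)ᶜ, G.edist a w ≠ G.edist b w := by
      intro a b ⟨w, h1, h2, h3, _, _, hne⟩
      exact ⟨w, by simp [h1, h2, h3], edist_ne_of_asep hne⟩
    have symw : ∀ a b : V, SepW G x y z a b →
        ∃ w ∈ ({x, y, z} : Set V)ᶜ, G.edist b w ≠ G.edist a w := by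
      intro a b h
      obtain ⟨w, hw, hne⟩ := getw a b h
      exact ⟨w, hw, hne.symm⟩
    rcases hu with rfl | rfl | rfl <;> rcases hv with rfl | rfl | rfl
    · exact absurd rfl huv
    · exact getw _ _ s1
    · exact getw _ _ s2
    · exact symw _ _ s1
    · exact absurd rfl huv
    · exact getw _ _ s3
    · exact symw _ _ s2
    · exact symw _ _ s3
    · exact absurd rfl huv
  · -- cardinality
    have h3 : ({x, y, z} : Set V).ncard = 3 := by
      rw [Set.ncard_insert_of_notMem (by simp [hxy, hxz]) (Set.toFinite _),
        Set.ncard_pair hyz]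
    have := Set.ncard_add_ncard_compl ({x, y, z} : Set V)
    rw [h3, Nat.card_eq_fintype_card] at this
    omega

end MldBounds

section TwoLe

variable {V : Type*} [Fintype V]

lemma two_le_mldNum (G : SimpleGraph V) (hcard : 3 ≤ Fintype.card V) :
    2 ≤ mldNum G := by
  classical
  have hne : {k | ∃ D : Set V, IsDominatingSet G D ∧ IsLocatingSet G D ∧
      D.ncard = k}.Nonempty := by
    refine ⟨Fintype.card V, Set.univ, ?_, ⟨?_, ?_⟩, ?_⟩
    · intro v hv; exact absurd (Set.mem_univ v) hv
    · intro v hv; exact absurd (Set.mem_univ v) hv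
    · intro u v huv
      refine ⟨u, Set.mem_univ u, ?_⟩
      rw [edist_self]
      intro h
      exact huv (edist_eq_zero_iff.mp h.symm).symm
    · rw [Set.ncard_univ, Nat.card_eq_fintype_card]
  have hmem := Nat.sInf_mem hne
  obtain ⟨D, hdom, hloc, hcardD⟩ := hmem
  have hcardD' : D.ncard = mldNum G := hcardD
  by_contra hlt
  push_neg at hlt
  interval_cases h : mldNum G
  · -- mldNum = 0
    have hcardD := hcardD'
    have hD : D = ∅ := (Set.ncard_eq_zero (Set.toFinite D)).mp hcardD
    have : Nontrivial V := Fintype.one_lt_card_iff_nontrivial.mp (by omega)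
    obtain ⟨u, v, huv⟩ := exists_pair_ne V
    obtain ⟨w, hw, _⟩ := hloc.2 u v huv
    rw [hD] at hw
    exact absurd hw (Set.notMem_empty w)
  · -- mldNum = 1
    have hcardD := hcardD'
    obtain ⟨a, ha⟩ := Set.ncard_eq_one.mp hcardD
    have herase : 2 ≤ (Finset.univ.erase a).card := by
      rw [Finset.card_erase_of_mem (Finset.mem_univ a), Finset.card_univ]
      omega
    obtain ⟨u, hu, v, hv, huv⟩ := (Finset.one_lt_card (s := Finset.univ.erase a)).mp (by omega)
    have hua : u ≠ a := (Finset.mem_erase.mp hu).1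
    have hva : v ≠ a := (Finset.mem_erase.mp hv).1
    have hadj : ∀ t : V, t ≠ a → G.Adj t a := by
      intro t hta
      obtain ⟨s, hs, hadj⟩ := hdom t (by simp [ha, hta])
      rw [ha, Set.mem_singleton_iff] at hs
      exact hs ▸ hadj
    obtain ⟨w, hw, hne⟩ := hloc.2 u v huv
    rw [ha, Set.mem_singleton_iff] at hw
    subst hw
    rw [edist_eq_one_iff_adj.mpr (hadj u hua), edist_eq_one_iff_adj.mpr (hadj v hva)] at hne
    exact hne rfl

end TwoLe

/-- For every doubly-connected graph `G` of order `n ≥ 5`,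
`4 ≤ η(G) + η(Ḡ) ≤ 2n - 5`. -/
theorem mldNum_nordhaus_gaddum_doubly_connected {V : Type*} [Fintype V]
    (G : SimpleGraph V) (hn : 5 ≤ Fintype.card V) (hG : G.Connected)
    (hGc : Gᶜ.Connected) :
    4 ≤ mldNum G + mldNum Gᶜ ∧ mldNum G + mldNum Gᶜ ≤ 2 * Fintype.card V - 5 := by
  classical
  have hn3 : 3 ≤ Fintype.card V := by omega
  have hccG : Gᶜᶜ = G := compl_compl G
  have hGcc : Gᶜᶜ.Connected := by rwa [hccG]
  have h2G := two_le_mldNum G hn3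
  have h2Gc := two_le_mldNum Gᶜ hn3
  obtain ⟨x, y, z, hxy, hxz, hyz, s1, s2, s3, hdom⟩ := good_exists hG hGc hn
  have hpG : mldNum G ≤ Fintype.card V - 2 := mldNum_le_sub_two hG hGc (by omega)
  have hpGc : mldNum Gᶜ ≤ Fintype.card V - 2 := mldNum_le_sub_two hGc hGcc (by omega)
  rcases hdom with h | h
  · have h3G := mldNum_le_of_triple G hxy hxz hyz s1 s2 s3 h
    exact ⟨by omega, by omega⟩
  · have h3Gc := mldNum_le_of_triple Gᶜ hxy hxz hyz (sepW_compl s1) (sepW_compl s2)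
      (sepW_compl s3) h
    exact ⟨by omega, by omega⟩
end

section
/- For every doubly-connected graph G of order n ≥ 5, 4 ≤ λ(G) + λ(Ḡ) ≤ 2n − 5. -/
/-! Since `G` and `Gᶜ` are both connected, `G` contains an induced path `a b c d` (Seinsche), and
then `b d a c` is an induced path of `Gᶜ`. Deleting the two ends of an induced `P₄` leaves an
LD-set, the middle vertices telling the ends apart; this gives `λ ≤ n - 2` for both graphs. A
fifth vertex `x` can be deleted as well, together with a suitable pair of path vertices, in `G`
or in `Gᶜ` according to the adjacencies of `x` to the path, so one of the two bounds improves to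
`n - 3`. The lower bound holds because an LD-set with at most one vertex leaves at most one
vertex outside it. -/

open SimpleGraph

/-- `D` is a locating-dominating set (LD-set) of `G`: for every two distinct vertices
`u, v ∉ D`, the sets `N(u) ∩ D` and `N(v) ∩ D` are nonempty and distinct. -/
def IsLDSet {V : Type*} (G : SimpleGraph V) (D : Set V) : Prop :=
  ∀ u ∉ D, ∀ v ∉ D, u ≠ v →
    (G.neighborSet u ∩ D).Nonempty ∧ (G.neighborSet v ∩ D).Nonempty ∧
    G.neighborSet u ∩ D ≠ G.neighborSet v ∩ D

/-- The location-domination number `λ(G)`: the minimum cardinality of an LD-set. -/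
noncomputable def ldNum {V : Type*} [Fintype V] (G : SimpleGraph V) : ℕ :=
  sInf {k | ∃ D : Set V, IsLDSet G D ∧ D.ncard = k}

section

variable {V : Type*}

namespace SimpleGraph

variable {W : Type*} {G : SimpleGraph V}

structure IsInducedP4 (G : SimpleGraph V) (a b c d : V) : Prop where
  adj_ab : G.Adj a b
  adj_bc : G.Adj b c
  adj_cd : G.Adj c d
  not_adj_ac : ¬G.Adj a c
  not_adj_ad : ¬G.Adj a d
  not_adj_bd : ¬G.Adj b d

namespace IsInducedP4

variable {a b c d : V}

lemma ne_ac (h : G.IsInducedP4 a b c d) : a ≠ c := by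
  rintro rfl; exact h.not_adj_ad h.adj_cd

lemma ne_ad (h : G.IsInducedP4 a b c d) : a ≠ d := by
  rintro rfl; exact h.not_adj_ac h.adj_cd.symm

lemma ne_bd (h : G.IsInducedP4 a b c d) : b ≠ d := by
  rintro rfl; exact h.not_adj_ad h.adj_ab

lemma reverse (h : G.IsInducedP4 a b c d) : G.IsInducedP4 d c b a :=
  ⟨h.adj_cd.symm, h.adj_bc.symm, h.adj_ab.symm, fun h' => h.not_adj_bd h'.symm,
    fun h' => h.not_adj_ad h'.symm, fun h' => h.not_adj_ac h'.symm⟩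

lemma compl (h : G.IsInducedP4 a b c d) : Gᶜ.IsInducedP4 b d a c :=
  ⟨(compl_adj _ _ _).mpr ⟨h.ne_bd, h.not_adj_bd⟩,
    (compl_adj _ _ _).mpr ⟨h.ne_ad.symm, fun h' => h.not_adj_ad h'.symm⟩,
    (compl_adj _ _ _).mpr ⟨h.ne_ac, h.not_adj_ac⟩,
    fun h' => ((compl_adj _ _ _).mp h').2 h.adj_ab.symm,
    fun h' => ((compl_adj _ _ _).mp h').2 h.adj_bc,
    fun h' => ((compl_adj _ _ _).mp h').2 h.adj_cd.symm⟩

lemma of_compl (h : Gᶜ.IsInducedP4 a b c d) : G.IsInducedP4 b d a c :=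
  compl_compl G ▸ h.compl

lemma map {G' : SimpleGraph W} (h : G.IsInducedP4 a b c d) (f : G ↪g G') :
    G'.IsInducedP4 (f a) (f b) (f c) (f d) :=
  ⟨f.map_adj_iff.2 h.adj_ab, f.map_adj_iff.2 h.adj_bc, f.map_adj_iff.2 h.adj_cd,
    fun h' => h.not_adj_ac (f.map_adj_iff.1 h'), fun h' => h.not_adj_ad (f.map_adj_iff.1 h'),
    fun h' => h.not_adj_bd (f.map_adj_iff.1 h')⟩

end IsInducedP4

lemma compl_induce (G : SimpleGraph V) (s : Set V) : (G.induce s)ᶜ = Gᶜ.induce s := by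
  ext x y
  simp [Subtype.ext_iff]

/-- A cut vertex `v` of `G` yields the induced path `b a v c`, where `b` is at distance two from
`v` (it exists since `v` has a non-neighbour) and `c` is a neighbour of `v` in a component of
`G - v` other than that of `b`. -/
lemma exists_isInducedP4_of_not_connected_induce [Nontrivial V] (hG : G.Connected)
    (hGc : Gᶜ.Connected) {v : V} (hv : ¬(G.induce {v}ᶜ).Connected) :
    ∃ a b c d, G.IsInducedP4 a b c d := by
  obtain ⟨u, hvu⟩ := hGc.preconnected.exists_adj_of_nontrivial v
  rw [compl_adj] at hvu
  obtain ⟨⟨⟨a, b⟩, hab⟩, -, ha, hb⟩ := (hG.preconnected v u).some.exists_boundary_dart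
    {w | w = v ∨ G.Adj v w} (.inl rfl) (by simp [hvu.1.symm, hvu.2])
  simp only [Set.mem_ofPred_eq, not_or] at ha hb
  have hva : G.Adj v a := ha.resolve_left (by rintro rfl; exact hb.2 hab)
  have hbv : b ∉ ({v} : Set V) := hb.1
  have : Nonempty ({v}ᶜ : Set V) := ⟨⟨b, hbv⟩⟩
  obtain ⟨x, y, hxy⟩ : ∃ x y, ¬(G.induce {v}ᶜ).Reachable x y := by
    by_contra! hreach
    exact hv ⟨hreach⟩
  obtain ⟨C, hC⟩ : ∃ C : G.ComponentCompl {v}, C ≠ G.componentComplMk hbv := by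
    by_contra! hall
    exact hxy (ConnectedComponent.eq.mp ((hall _).trans (hall _).symm))
  obtain ⟨⟨c, v'⟩, ⟨hcv', rfl⟩, hv', hcv⟩ :=
    ComponentCompl.exists_adj_boundary_pair hG.preconnected (Set.singleton_nonempty v) C
  dsimp only at hcv' hv' hcv
  rw [Set.mem_singleton_iff] at hv'
  subst v'
  have hav : a ∉ ({v} : Set V) := hva.ne'
  have hbc : ¬G.Adj b c := fun hbc => hC (componentComplMk_eq_of_adj G hbv hcv' hbc).symm
  have hac : ¬G.Adj a c := fun hac => hC <| (componentComplMk_eq_of_adj G hav hcv' hac).symm.trans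
    (componentComplMk_eq_of_adj G hav hbv hab)
  exact ⟨b, a, v, c, ⟨hab.symm, hva.symm, hcv.symm, fun h => hb.2 h.symm, hbc, hac⟩⟩

/-- Seinsche's theorem. -/
theorem exists_isInducedP4 [Finite V] [Nontrivial V] (hG : G.Connected) (hGc : Gᶜ.Connected) :
    ∃ a b c d, G.IsInducedP4 a b c d := by
  induction hn : Nat.card V using Nat.strong_induction_on generalizing V with
  | _ n ih =>
    obtain ⟨v⟩ := ‹Nontrivial V›.to_nonempty
    by_cases hv : ¬(G.induce {v}ᶜ).Connected
    · exact exists_isInducedP4_of_not_connected_induce hG hGc hv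
    by_cases hvc : ¬(Gᶜ.induce {v}ᶜ).Connected
    · obtain ⟨a, b, c, d, h⟩ :=
        exists_isInducedP4_of_not_connected_induce hGc (by rwa [compl_compl]) hvc
      exact ⟨_, _, _, _, h.of_compl⟩
    rw [not_not] at hv hvc
    rcases subsingleton_or_nontrivial ({v}ᶜ : Set V) with hs | hs
    · obtain ⟨w, hw⟩ := hG.preconnected.exists_adj_of_nontrivial v
      obtain ⟨w', hw'⟩ := hGc.preconnected.exists_adj_of_nontrivial v
      have hww' : w = w' := congrArg Subtype.val
        (Subsingleton.elim (⟨w, hw.ne'⟩ : ({v}ᶜ : Set V)) ⟨w', hw'.ne'⟩)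
      exact (((compl_adj _ _ _).mp hw').2 (hww' ▸ hw)).elim
    · rw [← compl_induce] at hvc
      obtain ⟨a, b, c, d, h⟩ :=
        ih _ (hn ▸ Finite.card_subtype_lt (x := v) (by simp)) hv hvc rfl
      exact ⟨_, _, _, _, h.map (Embedding.induce _)⟩

end SimpleGraph

section LocatingDominating

variable {G : SimpleGraph V}

lemma IsLDSet.subsingleton_compl {D : Set V} (h : IsLDSet G D) (hD : D.Subsingleton) :
    Dᶜ.Subsingleton := by
  intro u hu v hv
  by_contra huv
  obtain ⟨⟨x, hx⟩, ⟨y, hy⟩, hne⟩ := h u hu v hv huv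
  have hxy : x = y := hD hx.2 hy.2
  subst hxy
  exact hne ((hD.anti Set.inter_subset_right).eq_singleton_of_mem hx ▸
    ((hD.anti Set.inter_subset_right).eq_singleton_of_mem hy).symm)

lemma isLDSet_compl_of_witnesses {S : Set V} {p q : V} (hp : p ∉ S) (hq : q ∉ S)
    (hdom : ∀ u ∈ S, G.Adj u p ∨ G.Adj u q)
    (hsep : ∀ u ∈ S, ∀ v ∈ S,
      (G.Adj u p ↔ G.Adj v p) → (G.Adj u q ↔ G.Adj v q) → u = v) :
    IsLDSet G Sᶜ := by
  have hdom' : ∀ u ∈ S, (G.neighborSet u ∩ Sᶜ).Nonempty := fun u hu =>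
    (hdom u hu).elim (fun h => ⟨p, h, hp⟩) (fun h => ⟨q, h, hq⟩)
  intro u hu v hv huv
  rw [Set.notMem_compl_iff] at hu hv
  refine ⟨hdom' u hu, hdom' v hv, fun heq => huv (hsep u hu v hv ?_ ?_)⟩
  · simpa [hp] using Set.ext_iff.mp heq p
  · simpa [hq] using Set.ext_iff.mp heq q

variable [Fintype V]

lemma exists_isLDSet_ncard_eq_ldNum (G : SimpleGraph V) :
    ∃ D, IsLDSet G D ∧ D.ncard = ldNum G := by
  have hne : {k | ∃ D : Set V, IsLDSet G D ∧ D.ncard = k}.Nonempty :=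
    ⟨_, Set.univ, fun u hu => absurd (Set.mem_univ u) hu, rfl⟩
  exact Nat.sInf_mem hne

lemma ldNum_le_ncard {D : Set V} (h : IsLDSet G D) : ldNum G ≤ D.ncard :=
  Nat.sInf_le ⟨D, h, rfl⟩

lemma ldNum_le_card_sub_ncard {S : Set V} (h : IsLDSet G Sᶜ) :
    ldNum G ≤ Fintype.card V - S.ncard := by
  have := Set.ncard_add_ncard_compl S
  rw [Nat.card_eq_fintype_card] at this
  have := ldNum_le_ncard h
  omega

lemma two_le_ldNum (h : 3 ≤ Fintype.card V) : 2 ≤ ldNum G := by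
  obtain ⟨D, hD, hDn⟩ := exists_isLDSet_ncard_eq_ldNum G
  by_contra! hlt
  have hsub : D.Subsingleton := Set.ncard_le_one_iff_subsingleton.mp (by omega)
  have := Set.ncard_le_one_iff_subsingleton.mpr (hD.subsingleton_compl hsub)
  have := Set.ncard_add_ncard_compl D
  rw [Nat.card_eq_fintype_card] at this
  omega

lemma ldNum_le_card_sub_two_of_witnesses {p q v w : V} (hvp : G.Adj v p) (hvq : ¬G.Adj v q)
    (hwp : ¬G.Adj w p) (hwq : G.Adj w q) (hpw : p ≠ w) (hqv : q ≠ v) :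
    ldNum G ≤ Fintype.card V - 2 := by
  have hvw : v ≠ w := by rintro rfl; exact hwp hvp
  rw [← Set.ncard_pair hvw]
  refine ldNum_le_card_sub_ncard (isLDSet_compl_of_witnesses (p := p) (q := q) ?_ ?_ ?_ ?_)
  · simp [hvp.ne', hpw]
  · simp [hqv, hwq.ne']
  · simp only [Set.mem_insert_iff, Set.mem_singleton_iff]
    rintro s (rfl | rfl) <;> tauto
  · simp only [Set.mem_insert_iff, Set.mem_singleton_iff]
    rintro s (rfl | rfl) t (rfl | rfl) <;> tauto

lemma ldNum_le_card_sub_three_of_witnesses {p q u v w : V} (hup : G.Adj u p) (huq : G.Adj u q)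
    (hvp : G.Adj v p) (hvq : ¬G.Adj v q) (hwp : ¬G.Adj w p) (hwq : G.Adj w q)
    (hpw : p ≠ w) (hqv : q ≠ v) :
    ldNum G ≤ Fintype.card V - 3 := by
  have hS : ({u, v, w} : Set V).ncard = 3 := Set.ncard_eq_three.mpr
    ⟨u, v, w, by rintro rfl; exact hvq huq, by rintro rfl; exact hwp hup,
      by rintro rfl; exact hwp hvp, rfl⟩
  rw [← hS]
  refine ldNum_le_card_sub_ncard (isLDSet_compl_of_witnesses (p := p) (q := q) ?_ ?_ ?_ ?_)
  · simp [hup.ne', hvp.ne', hpw]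
  · simp [huq.ne', hqv, hwq.ne']
  · simp only [Set.mem_insert_iff, Set.mem_singleton_iff]
    rintro s (rfl | rfl | rfl) <;> tauto
  · simp only [Set.mem_insert_iff, Set.mem_singleton_iff]
    rintro s (rfl | rfl | rfl) t (rfl | rfl | rfl) <;> tauto

end LocatingDominating

namespace SimpleGraph.IsInducedP4

variable [Fintype V] {G : SimpleGraph V} {a b c d x : V}

lemma ldNum_le_card_sub_two (h : G.IsInducedP4 a b c d) : ldNum G ≤ Fintype.card V - 2 :=
  ldNum_le_card_sub_two_of_witnesses h.adj_ab h.not_adj_ac (fun h' => h.not_adj_bd h'.symm)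
    h.adj_cd.symm h.ne_bd h.ne_ac.symm

lemma ldNum_le_card_sub_three_of_adj_of_adj (h : G.IsInducedP4 a b c d) (hb : G.Adj x b)
    (hc : G.Adj x c) : ldNum G ≤ Fintype.card V - 3 :=
  ldNum_le_card_sub_three_of_witnesses hb hc h.adj_ab h.not_adj_ac
    (fun h' => h.not_adj_bd h'.symm) h.adj_cd.symm h.ne_bd h.ne_ac.symm

lemma ldNum_le_card_sub_three_of_adj_of_not_adj (h : G.IsInducedP4 a b c d) (ha : G.Adj x a)
    (hc : ¬G.Adj x c) : ldNum G ≤ Fintype.card V - 3 :=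
  ldNum_le_card_sub_three_of_witnesses h.adj_ab.symm h.adj_bc ha hc
    (fun h' => h.not_adj_ad h'.symm) h.adj_cd.symm h.ne_ad
    (by rintro rfl; exact h.not_adj_ac ha.symm)

/-- Up to reversing the path and passing to the complement (whose induced path is `b d a c`),
`x` is adjacent to both middle vertices or to an end but not to the vertex two steps away. -/
lemma ldNum_le_card_sub_three_or (h : G.IsInducedP4 a b c d) (hxa : x ≠ a) (hxb : x ≠ b)
    (hxc : x ≠ c) (hxd : x ≠ d) :
    ldNum G ≤ Fintype.card V - 3 ∨ ldNum Gᶜ ≤ Fintype.card V - 3 := by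
  by_cases hbc : G.Adj x b ∧ G.Adj x c
  · exact .inl (h.ldNum_le_card_sub_three_of_adj_of_adj hbc.1 hbc.2)
  by_cases had : ¬G.Adj x a ∧ ¬G.Adj x d
  · exact .inr (h.compl.ldNum_le_card_sub_three_of_adj_of_adj
      ((compl_adj _ _ _).mpr ⟨hxd, had.2⟩) ((compl_adj _ _ _).mpr ⟨hxa, had.1⟩))
  rw [not_and_or] at hbc
  rw [not_and_or, not_not, not_not] at had
  rcases had with ha | hd <;> rcases hbc with hb | hc
  · exact .inr (h.compl.ldNum_le_card_sub_three_of_adj_of_not_adj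
      ((compl_adj _ _ _).mpr ⟨hxb, hb⟩) (fun h' => ((compl_adj _ _ _).mp h').2 ha))
  · exact .inl (h.ldNum_le_card_sub_three_of_adj_of_not_adj ha hc)
  · exact .inl (h.reverse.ldNum_le_card_sub_three_of_adj_of_not_adj hd hb)
  · exact .inr (h.compl.reverse.ldNum_le_card_sub_three_of_adj_of_not_adj
      ((compl_adj _ _ _).mpr ⟨hxc, hc⟩) (fun h' => ((compl_adj _ _ _).mp h').2 hd))

end SimpleGraph.IsInducedP4

end

/-- For every doubly-connected graph `G` of order `n ≥ 5`,
`4 ≤ λ(G) + λ(Ḡ) ≤ 2n - 5`. -/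
theorem ldNum_nordhaus_gaddum_doubly_connected {V : Type*} [Fintype V]
    (G : SimpleGraph V) (hn : 5 ≤ Fintype.card V) (hG : G.Connected)
    (hGc : Gᶜ.Connected) :
    4 ≤ ldNum G + ldNum Gᶜ ∧ ldNum G + ldNum Gᶜ ≤ 2 * Fintype.card V - 5 := by
  classical
  have : Nontrivial V := Fintype.one_lt_card_iff_nontrivial.mp (by omega)
  obtain ⟨a, b, c, d, hP⟩ := exists_isInducedP4 hG hGc
  obtain ⟨x, -, hx⟩ := Finset.exists_mem_notMem_of_card_lt_card
    (s := {a, b, c, d}) (Finset.card_le_four.trans_lt (by rw [Finset.card_univ]; omega))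
  simp only [Finset.mem_insert, Finset.mem_singleton, not_or] at hx
  obtain ⟨hxa, hxb, hxc, hxd⟩ := hx
  have h2 := hP.ldNum_le_card_sub_two
  have h2c := hP.compl.ldNum_le_card_sub_two
  have h3 := hP.ldNum_le_card_sub_three_or hxa hxb hxc hxd
  have l := two_le_ldNum (G := G) (by omega)
  have lc := two_le_ldNum (G := Gᶜ) (by omega)
  constructor <;> omega
end

section
/- Let S be an LD-set of a graph G. If there is no vertex w ∈ V \ S with S ⊆ N_G(w), then S is an LD-set of the complement Ḡ; otherwise, if w ∈ V \ S satisfies S ⊆ N_G(w), then S ∪ {w} is an LD-set of Ḡ. -/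
/-!
For `x ∉ S` the trace `N_Ḡ(x) ∩ S` is `S \ N_G(x)`, the complement within `S` of the trace in `G`.
Complementation within `S` is injective, so `S` still separates the vertices outside it in `Ḡ`,
and the trace is nonempty unless `S ⊆ N_G(x)`. Every vertex `w ∉ S` with `S ⊆ N_G(w)` has trace
`S` in `G`, so there is at most one of them, and adding it to `S` repairs domination.
-/

open SimpleGraph

section

variable {V : Type*} {G : SimpleGraph V} {S D : Set V}

theorem isLDSet_of_subset_of_locates (hSD : S ⊆ D)
    (h : ∀ u ∉ D, ∀ v ∉ D, u ≠ v →
      (G.neighborSet u ∩ S).Nonempty ∧ (G.neighborSet v ∩ S).Nonempty ∧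
      G.neighborSet u ∩ S ≠ G.neighborSet v ∩ S) :
    IsLDSet G D := by
  intro u hu v hv huv
  obtain ⟨hu_dom, hv_dom, hne⟩ := h u hu v hv huv
  refine ⟨hu_dom.mono (Set.inter_subset_inter_right _ hSD),
    hv_dom.mono (Set.inter_subset_inter_right _ hSD), fun heq => hne ?_⟩
  rw [← Set.inter_eq_right.mpr hSD, ← Set.inter_assoc, ← Set.inter_assoc, heq]

theorem compl_neighborSet_inter_eq_sdiff {x : V} (hx : x ∉ S) :
    Gᶜ.neighborSet x ∩ S = S \ G.neighborSet x := by
  ext s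
  simp only [Set.mem_inter_iff, mem_neighborSet, compl_adj, Set.mem_sdiff]
  exact ⟨fun ⟨⟨_, hadj⟩, hs⟩ => ⟨hs, hadj⟩,
    fun ⟨hs, hadj⟩ => ⟨⟨fun h => hx (h ▸ hs), hadj⟩, hs⟩⟩

namespace IsLDSet

theorem compl_neighborSet_inter_ne (hS : IsLDSet G S) {u v : V} (hu : u ∉ S) (hv : v ∉ S)
    (huv : u ≠ v) : Gᶜ.neighborSet u ∩ S ≠ Gᶜ.neighborSet v ∩ S := by
  rw [compl_neighborSet_inter_eq_sdiff hu, compl_neighborSet_inter_eq_sdiff hv]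
  intro h
  apply (hS u hu v hv huv).2.2
  rw [Set.inter_comm, ← Set.sdiff_sdiff_right_self, h, Set.sdiff_sdiff_right_self, Set.inter_comm]

theorem not_subset_neighborSet (hS : IsLDSet G S) {w x : V} (hw : w ∉ S)
    (hSw : S ⊆ G.neighborSet w) (hx : x ∉ S) (hxw : x ≠ w) : ¬ S ⊆ G.neighborSet x := by
  intro hSx
  apply (hS x hx w hw hxw).2.2
  rw [Set.inter_eq_right.mpr hSx, Set.inter_eq_right.mpr hSw]

theorem isLDSet_compl_of_subset (hS : IsLDSet G S) (hSD : S ⊆ D)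
    (hD : ∀ x ∉ D, ¬ S ⊆ G.neighborSet x) : IsLDSet Gᶜ D := by
  have hdom : ∀ x ∉ D, (Gᶜ.neighborSet x ∩ S).Nonempty := fun x hx => by
    rw [compl_neighborSet_inter_eq_sdiff (fun h => hx (hSD h))]
    exact Set.sdiff_nonempty.mpr (hD x hx)
  refine isLDSet_of_subset_of_locates hSD fun u hu v hv huv => ⟨hdom u hu, hdom v hv, ?_⟩
  exact hS.compl_neighborSet_inter_ne (fun h => hu (hSD h)) (fun h => hv (hSD h)) huv

end IsLDSet

end

/-- If `S` is an LD-set of `G`, then: if no vertex `w ∉ S` satisfies `S ⊆ N_G(w)`, then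
`S` is an LD-set of `Ḡ`; and if `w ∉ S` satisfies `S ⊆ N_G(w)`, then `S ∪ {w}` is an
LD-set of `Ḡ`. -/
theorem isLDSet_compl {V : Type*} (G : SimpleGraph V) (S : Set V)
    (hS : IsLDSet G S) :
    ((∀ w ∉ S, ¬ S ⊆ G.neighborSet w) → IsLDSet Gᶜ S) ∧
    (∀ w ∉ S, S ⊆ G.neighborSet w → IsLDSet Gᶜ (S ∪ {w})) := by
  refine ⟨hS.isLDSet_compl_of_subset subset_rfl, fun w hw hSw => ?_⟩
  refine hS.isLDSet_compl_of_subset Set.subset_union_left fun x hx => ?_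
  rw [Set.mem_union, Set.mem_singleton_iff, not_or] at hx
  exact hS.not_subset_neighborSet hw hSw hx.1 hx.2
end

section
/- For every finite simple graph G, |λ(G) − λ(Ḡ)| ≤ 1, where Ḡ denotes the complement of G. -/
open SimpleGraph

lemma compl_neighborSet_inter {V : Type*} (G : SimpleGraph V) {D : Set V} {u : V}
    (hu : u ∉ D) : Gᶜ.neighborSet u ∩ D = D \ (G.neighborSet u ∩ D) := by
  ext x
  simp only [neighborSet, compl_adj, Set.mem_inter_iff, Set.mem_setOf_eq, Set.mem_diff]
  constructor
  · rintro ⟨⟨hne, hnadj⟩, hxD⟩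
    exact ⟨hxD, fun h => hnadj h.1⟩
  · rintro ⟨hxD, h⟩
    exact ⟨⟨fun he => hu (he ▸ hxD), fun hadj => h ⟨hadj, hxD⟩⟩, hxD⟩

lemma diff_ne_of_inter_ne {V : Type*} {D A B : Set V}
    (h : A ∩ D ≠ B ∩ D) : D \ (A ∩ D) ≠ D \ (B ∩ D) := by
  intro he
  apply h
  have h1 : D \ (D \ (A ∩ D)) = A ∩ D := Set.diff_diff_cancel_left Set.inter_subset_right
  have h2 : D \ (D \ (B ∩ D)) = B ∩ D := Set.diff_diff_cancel_left Set.inter_subset_right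
  rw [← h1, ← h2, he]

/-- Key lemma: if `D` is an LD-set of `G`, then `λ(Gᶜ) ≤ |D| + 1`. -/
lemma ldNum_compl_le {V : Type*} [Fintype V] (G : SimpleGraph V) {D : Set V}
    (hD : IsLDSet G D) : ldNum Gᶜ ≤ D.ncard + 1 := by
  -- at most one vertex outside D has empty Gᶜ-neighborhood inside D
  by_cases hbad : ∃ u ∉ D, Gᶜ.neighborSet u ∩ D = ∅
  · obtain ⟨u, huD, hu⟩ := hbad
    -- u is the unique bad vertex
    have huniq : ∀ v ∉ D, Gᶜ.neighborSet v ∩ D = ∅ → v = u := by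
      intro v hvD hv
      by_contra hne
      have h := (hD u huD v hvD (Ne.symm hne)).2.2
      rw [compl_neighborSet_inter G huD] at hu
      rw [compl_neighborSet_inter G hvD] at hv
      have h1 : G.neighborSet u ∩ D = D :=
        Set.inter_subset_right.antisymm (by
          intro x hx; by_contra hxn
          exact (Set.eq_empty_iff_forall_notMem.mp hu x) ⟨hx, hxn⟩)
      have h2 : G.neighborSet v ∩ D = D :=
        Set.inter_subset_right.antisymm (by
          intro x hx; by_contra hxn
          exact (Set.eq_empty_iff_forall_notMem.mp hv x) ⟨hx, hxn⟩)
      exact h (h1.trans h2.symm)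
    have hld : IsLDSet Gᶜ (insert u D) := by
      intro a ha b hb hab
      have haD : a ∉ D := fun h => ha (Set.mem_insert_iff.mpr (Or.inr h))
      have hbD : b ∉ D := fun h => hb (Set.mem_insert_iff.mpr (Or.inr h))
      have hau : a ≠ u := fun h => ha (h ▸ Set.mem_insert u D)
      have hbu : b ≠ u := fun h => hb (h ▸ Set.mem_insert u D)
      have hane : (Gᶜ.neighborSet a ∩ D).Nonempty := by
        rw [Set.nonempty_iff_ne_empty]; exact fun h => hau (huniq a haD h)
      have hbne : (Gᶜ.neighborSet b ∩ D).Nonempty := by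
        rw [Set.nonempty_iff_ne_empty]; exact fun h => hbu (huniq b hbD h)
      refine ⟨hane.mono (Set.inter_subset_inter_right _ (Set.subset_insert u D)),
        hbne.mono (Set.inter_subset_inter_right _ (Set.subset_insert u D)), ?_⟩
      intro heq
      have h := (hD a haD b hbD hab).2.2
      have hD' : Gᶜ.neighborSet a ∩ D ≠ Gᶜ.neighborSet b ∩ D := by
        rw [compl_neighborSet_inter G haD, compl_neighborSet_inter G hbD]
        exact diff_ne_of_inter_ne h
      apply hD'
      have : (Gᶜ.neighborSet a ∩ insert u D) ∩ D = (Gᶜ.neighborSet b ∩ insert u D) ∩ D := by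
        rw [heq]
      rwa [Set.inter_assoc, Set.inter_assoc,
        Set.insert_inter_of_notMem huD, Set.inter_self] at this
    calc ldNum Gᶜ ≤ (insert u D).ncard := Nat.sInf_le ⟨insert u D, hld, rfl⟩
      _ ≤ D.ncard + 1 := Set.ncard_insert_le u D
  · push_neg at hbad
    have hld : IsLDSet Gᶜ D := by
      intro a ha b hb hab
      refine ⟨hbad a ha,
        hbad b hb, ?_⟩
      rw [compl_neighborSet_inter G ha, compl_neighborSet_inter G hb]
      exact diff_ne_of_inter_ne (hD a ha b hb hab).2.2
    calc ldNum Gᶜ ≤ D.ncard := Nat.sInf_le ⟨D, hld, rfl⟩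
      _ ≤ D.ncard + 1 := Nat.le_succ _

lemma ldNum_spec {V : Type*} [Fintype V] (G : SimpleGraph V) :
    ∃ D : Set V, IsLDSet G D ∧ D.ncard = ldNum G := by
  have hne : {k | ∃ D : Set V, IsLDSet G D ∧ D.ncard = k}.Nonempty :=
    ⟨(Set.univ : Set V).ncard, Set.univ, fun u hu => absurd (Set.mem_univ u) hu, rfl⟩
  exact Nat.sInf_mem hne

/-- For every finite simple graph `G`, `|λ(G) - λ(Ḡ)| ≤ 1`. -/
theorem abs_ldNum_sub_ldNum_compl_le_one {V : Type*} [Fintype V]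
    (G : SimpleGraph V) :
    |(ldNum G : ℤ) - (ldNum Gᶜ : ℤ)| ≤ 1 := by
  obtain ⟨D, hD, hcard⟩ := ldNum_spec G
  obtain ⟨D', hD', hcard'⟩ := ldNum_spec Gᶜ
  have h1 : ldNum Gᶜ ≤ ldNum G + 1 := hcard ▸ ldNum_compl_le G hD
  have h2 : ldNum G ≤ ldNum Gᶜ + 1 := by
    have := ldNum_compl_le Gᶜ hD'
    rwa [compl_compl, hcard'] at this
  rw [abs_le]
  omega
end
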